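/- arXiv:1310.8195 — 4 statements merged into one kernel-verified Lean document; each statement's English description precedes it below -/
import Mathlib

section
/- For r ≥ 1 and independent variables w_1,...,w_r, and any p with 2 ≤ p ≤ r, the sum over m from 1 to r of ((-1)^m / m) times the sum over ordered set partitions (I_(1),...,I_(m)) of {1,...,r} into m nonempty blocks of the coefficient of x^{r-p} in ∏_{s=1}^m (1 + Σ_{j∈I_(s)} x·w_j)^{|I_(s)|-2} equals 0. -/
open Classical

/-- An ordered set partition of `Fin r` into `m` pairwise disjoint nonempty blocks. -/
def IsOSP {r m : ℕ} (I : Fin m → Finset (Fin r)) : Prop :=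
  (∀ s, (I s).Nonempty) ∧ (∀ s t, s ≠ t → Disjoint (I s) (I t)) ∧
    Finset.univ.biUnion I = (Finset.univ : Finset (Fin r))

/-- The factor `(1 + x · Σ_{j ∈ S} w_j)^{|S| - 2}` as a power series in `x` over
`ℚ[w_1,…,w_r]`, written as `(1+xc)^{|S|} · ((1+xc)⁻¹)^2` using `Ring.inverse`
(the base has constant term `1`, hence is a unit). -/
noncomputable def ospFactor {r : ℕ} (S : Finset (Fin r)) :
    PowerSeries (MvPolynomial (Fin r) ℚ) :=
  (1 + PowerSeries.X * PowerSeries.C (∑ j ∈ S, MvPolynomial.X j)) ^ S.card *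
    (Ring.inverse
      (1 + PowerSeries.X * PowerSeries.C (∑ j ∈ S, MvPolynomial.X j))) ^ 2

namespace OSP1

noncomputable section

abbrev Rr (r : ℕ) := PowerSeries (MvPolynomial (Fin r) ℚ)
abbrev Pr (r : ℕ) := MvPolynomial (Fin r) (Rr r)

variable {r : ℕ}

def cS (S : Finset (Fin r)) : MvPolynomial (Fin r) ℚ := ∑ j ∈ S, MvPolynomial.X j

def gS (S : Finset (Fin r)) : Rr r := 1 + PowerSeries.X * PowerSeries.C (cS S)

def ind (S : Finset (Fin r)) : Fin r →₀ ℕ := ∑ i ∈ S, Finsupp.single i 1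

lemma ind_apply (S : Finset (Fin r)) (j : Fin r) : ind S j = if j ∈ S then 1 else 0 := by
  classical
  rw [ind, Finset.sum_apply']
  simp [Finsupp.single_apply]

lemma ind_support (S : Finset (Fin r)) : (ind S).support = S := by
  ext j
  rw [Finsupp.mem_support_iff, ind_apply]
  split_ifs with h <;> simp [h]

lemma ind_inj {S T : Finset (Fin r)} (h : ind S = ind T) : S = T := by
  rw [← ind_support S, ← ind_support T, h]

lemma ind_decomp {S : Finset (Fin r)} {a b : Fin r →₀ ℕ} (h : a + b = ind S) :
    a.support ⊆ S ∧ a = ind a.support ∧ b = ind (S \ a.support) := by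
  have hj : ∀ j, a j + b j = ind S j := fun j => by
    rw [← Finsupp.add_apply, h]
  have hsub : a.support ⊆ S := by
    intro j hjs
    rw [Finsupp.mem_support_iff] at hjs
    have := hj j
    rw [ind_apply] at this
    by_contra hns
    rw [if_neg hns] at this
    omega
  refine ⟨hsub, ?_, ?_⟩
  · ext j
    rw [ind_apply]
    have := hj j
    rw [ind_apply] at this
    by_cases hjsup : j ∈ a.support
    · rw [if_pos hjsup]
      rw [Finsupp.mem_support_iff] at hjsup
      rw [if_pos (hsub (Finsupp.mem_support_iff.2 hjsup))] at this
      omega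
    · rw [if_neg hjsup]
      rw [Finsupp.notMem_support_iff] at hjsup
      exact hjsup
  · ext j
    rw [ind_apply]
    simp only [Finset.mem_sdiff]
    have := hj j
    rw [ind_apply] at this
    by_cases hjS : j ∈ S
    · rw [if_pos hjS] at this
      by_cases hjsup : j ∈ a.support
      · rw [if_neg (by tauto)]
        rw [Finsupp.mem_support_iff] at hjsup
        omega
      · rw [if_pos ⟨hjS, hjsup⟩]
        rw [Finsupp.notMem_support_iff] at hjsup
        omega
    · rw [if_neg hjS] at this
      rw [if_neg (by tauto)]
      omega

lemma ind_add_sdiff {A S : Finset (Fin r)} (h : A ⊆ S) : ind A + ind (S \ A) = ind S := by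
  ext j
  rw [Finsupp.add_apply, ind_apply, ind_apply, ind_apply]
  simp only [Finset.mem_sdiff]
  by_cases hA : j ∈ A
  · rw [if_pos hA, if_neg (by tauto), if_pos (h hA)]
  · by_cases hS : j ∈ S
    · rw [if_neg hA, if_pos ⟨hS, hA⟩, if_pos hS]
    · rw [if_neg hA, if_neg (by tauto), if_neg hS]

/-- Key convolution lemma. -/
lemma K1 (S : Finset (Fin r)) (p q : Pr r) :
    MvPolynomial.coeff (ind S) (p * q)
      = ∑ A ∈ S.powerset, MvPolynomial.coeff (ind A) p * MvPolynomial.coeff (ind (S \ A)) q := by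
  classical
  rw [MvPolynomial.coeff_mul]
  refine Finset.sum_bij' (fun x _ => x.1.support) (fun A _ => (ind A, ind (S \ A)))
    ?_ ?_ ?_ ?_ ?_
  · intro a ha
    rw [Finset.HasAntidiagonal.mem_antidiagonal] at ha
    exact Finset.mem_powerset.2 (ind_decomp ha).1
  · intro A hA
    rw [Finset.HasAntidiagonal.mem_antidiagonal]
    exact ind_add_sdiff (Finset.mem_powerset.1 hA)
  · intro a ha
    rw [Finset.HasAntidiagonal.mem_antidiagonal] at ha
    obtain ⟨h1, h2, h3⟩ := ind_decomp ha
    exact Prod.ext h2.symm h3.symm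
  · intro A hA
    exact ind_support A
  · intro a ha
    rw [Finset.HasAntidiagonal.mem_antidiagonal] at ha
    obtain ⟨h1, h2, h3⟩ := ind_decomp ha
    rw [← h2, ← h3]

def FP (r : ℕ) : Pr r :=
  ∑ S ∈ (Finset.univ : Finset (Fin r)).powerset.filter (fun S => S.Nonempty),
    MvPolynomial.C (ospFactor S) * MvPolynomial.monomial (ind S) 1

lemma coeff_FP (A : Finset (Fin r)) :
    MvPolynomial.coeff (ind A) (FP r) = if A.Nonempty then ospFactor A else 0 := by
  classical
  rw [FP, MvPolynomial.coeff_sum]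
  have h1 : ∀ S ∈ (Finset.univ : Finset (Fin r)).powerset.filter (fun S => S.Nonempty),
      MvPolynomial.coeff (ind A) (MvPolynomial.C (ospFactor S) * MvPolynomial.monomial (ind S) 1)
        = if S = A then ospFactor S else 0 := by
    intro S _
    rw [MvPolynomial.C_mul_monomial, mul_one, MvPolynomial.coeff_monomial]
    by_cases h : S = A
    · rw [if_pos (by rw [h]), if_pos h]
    · rw [if_neg (fun hh => h (ind_inj hh)), if_neg h]
  rw [Finset.sum_congr rfl h1, Finset.sum_ite_eq']
  simp [Finset.mem_filter]

/-- ordered decomposition condition -/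
def Cond {m : ℕ} (J : Fin m → Finset (Fin r)) (S : Finset (Fin r)) : Prop :=
  (∀ s t, s ≠ t → Disjoint (J s) (J t)) ∧ Finset.univ.biUnion J = S

lemma cond_cons_iff {m : ℕ} (A : Finset (Fin r)) (J : Fin m → Finset (Fin r))
    (S : Finset (Fin r)) :
    Cond (Fin.cons A J) S ↔ A ⊆ S ∧ Cond J (S \ A) := by
  classical
  constructor
  · rintro ⟨hd, hu⟩
    have hdAJ : ∀ s, Disjoint A (J s) := by
      intro s
      have := hd 0 s.succ (Ne.symm (Fin.succ_ne_zero s))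
      simpa using this
    have hmem : ∀ x, (x ∈ S ↔ x ∈ A ∨ ∃ s, x ∈ J s) := by
      intro x
      rw [← hu]
      simp [Finset.mem_biUnion, Fin.exists_fin_succ]
    refine ⟨?_, ?_, ?_⟩
    · intro x hx
      exact (hmem x).2 (Or.inl hx)
    · intro s t hst
      have := hd s.succ t.succ (by simpa [Fin.succ_inj] using hst)
      simpa using this
    · ext x
      simp only [Finset.mem_biUnion, Finset.mem_univ, true_and, Finset.mem_sdiff]
      constructor
      · rintro ⟨s, hs⟩
        refine ⟨(hmem x).2 (Or.inr ⟨s, hs⟩), fun hxA => ?_⟩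
        exact Finset.disjoint_left.1 (hdAJ s) hxA hs
      · rintro ⟨hxS, hxA⟩
        rcases (hmem x).1 hxS with h | h
        · exact absurd h hxA
        · exact h
  · rintro ⟨hAS, hd, hu⟩
    have hdAJ : ∀ s, Disjoint A (J s) := by
      intro s
      have hsub : J s ⊆ S \ A := by
        rw [← hu]
        intro x hx
        exact Finset.mem_biUnion.2 ⟨s, Finset.mem_univ s, hx⟩
      exact Finset.disjoint_left.2 fun x hxA hxJ => (Finset.mem_sdiff.1 (hsub hxJ)).2 hxA
    constructor
    · intro s t hst
      induction s using Fin.cases with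
      | zero =>
        induction t using Fin.cases with
        | zero => exact absurd rfl hst
        | succ t' => simpa using hdAJ t'
      | succ s' =>
        induction t using Fin.cases with
        | zero => simpa using (hdAJ s').symm
        | succ t' =>
          simpa using hd s' t' (fun h => hst (by rw [h]))
    · ext x
      simp only [Finset.mem_biUnion, Finset.mem_univ, true_and, Fin.exists_fin_succ,
        Fin.cons_zero, Fin.cons_succ]
      constructor
      · rintro (h | ⟨s, hs⟩)
        · exact hAS h
        · have hx : x ∈ S \ A := by
            rw [← hu]; exact Finset.mem_biUnion.2 ⟨s, Finset.mem_univ s, hs⟩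
          exact (Finset.mem_sdiff.1 hx).1
      · intro hxS
        by_cases hxA : x ∈ A
        · exact Or.inl hxA
        · have hx : x ∈ Finset.univ.biUnion J := by
            rw [hu]; exact Finset.mem_sdiff.2 ⟨hxS, hxA⟩
          rcases Finset.mem_biUnion.1 hx with ⟨s, _, hs⟩
          exact Or.inr ⟨s, hs⟩

lemma ind_empty : ind (∅ : Finset (Fin r)) = 0 := by simp [ind]

lemma Kpow : ∀ (m : ℕ) (S : Finset (Fin r)),
    MvPolynomial.coeff (ind S) (FP r ^ m)
      = ∑ J : Fin m → Finset (Fin r),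
          if Cond J S then ∏ s, MvPolynomial.coeff (ind (J s)) (FP r) else 0 := by
  intro m
  induction m with
  | zero =>
    intro S
    rw [pow_zero, Fintype.sum_unique, MvPolynomial.coeff_one]
    have hc : ∀ J : Fin 0 → Finset (Fin r), Cond J S ↔ S = ∅ := by
      intro J; simp [Cond, eq_comm]
    have hi : ind S = 0 ↔ S = ∅ := by
      constructor
      · intro h; exact ind_inj (h.trans ind_empty.symm)
      · intro h; rw [h, ind_empty]
    split_ifs with h1 h2 h2
    · simp
    · exact absurd ((hc _).2 (hi.1 h1.symm)) h2
    · exact absurd ((hi.2 ((hc _).1 h2)).symm) h1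
    · rfl
  | succ m ih =>
    intro S
    rw [pow_succ', K1 S (FP r) (FP r ^ m)]
    have e1 : (∑ J : Fin (m+1) → Finset (Fin r),
          if Cond J S then ∏ s, MvPolynomial.coeff (ind (J s)) (FP r) else 0)
        = ∑ AJ : Finset (Fin r) × (Fin m → Finset (Fin r)),
            if Cond (Fin.cons AJ.1 AJ.2) S then
              MvPolynomial.coeff (ind AJ.1) (FP r) *
                ∏ s, MvPolynomial.coeff (ind (AJ.2 s)) (FP r) else 0 := by
      refine (Fintype.sum_equiv (Fin.consEquiv fun _ => Finset (Fin r)) _ _ ?_).symm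
      rintro ⟨A, J⟩
      have he : (Fin.consEquiv fun _ => Finset (Fin r)) (A, J) = Fin.cons A J := rfl
      rw [he]
      congr 1
      rw [Fin.prod_univ_succ]
      simp
    have hsplit : ∀ A : Finset (Fin r),
        (∑ J : Fin m → Finset (Fin r),
          if Cond (Fin.cons A J) S then
            MvPolynomial.coeff (ind A) (FP r) *
              ∏ s, MvPolynomial.coeff (ind (J s)) (FP r) else 0)
        = if A ⊆ S then MvPolynomial.coeff (ind A) (FP r) *
            ∑ J : Fin m → Finset (Fin r),
              (if Cond J (S \ A) then ∏ s, MvPolynomial.coeff (ind (J s)) (FP r) else 0)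
          else 0 := by
      intro A
      by_cases hAS : A ⊆ S
      · rw [if_pos hAS, Finset.mul_sum]
        refine Finset.sum_congr rfl fun J _ => ?_
        by_cases hC : Cond J (S \ A)
        · rw [if_pos ((cond_cons_iff A J S).2 ⟨hAS, hC⟩), if_pos hC]
        · rw [if_neg (fun h => hC ((cond_cons_iff A J S).1 h).2), if_neg hC, mul_zero]
      · rw [if_neg hAS]
        refine Finset.sum_eq_zero fun J _ => ?_
        rw [if_neg (fun h => hAS ((cond_cons_iff A J S).1 h).1)]
    rw [e1, Fintype.sum_prod_type]
    rw [Finset.sum_congr rfl (fun A _ => hsplit A)]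
    have hpow : S.powerset = Finset.univ.filter (fun A => A ⊆ S) := by
      ext A; simp
    rw [hpow, Finset.sum_filter]
    refine Finset.sum_congr rfl fun A _ => ?_
    by_cases hAS : A ⊆ S
    · rw [if_pos hAS, if_pos hAS, ih]
    · rw [if_neg hAS, if_neg hAS]

lemma coeff_FP_pow_eq_zero {A : Finset (Fin r)} {m : ℕ} (h : A.card < m) :
    MvPolynomial.coeff (ind A) (FP r ^ m) = 0 := by
  classical
  rw [Kpow]
  refine Finset.sum_eq_zero fun J _ => ?_
  by_cases hC : Cond J A
  · rw [if_pos hC]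
    by_cases hne : ∀ s, (J s).Nonempty
    · exfalso
      have hcard : A.card = ∑ s : Fin m, (J s).card := by
        rw [← hC.2]
        exact Finset.card_biUnion (fun s _ t _ hst => hC.1 s t hst)
      have hm : m ≤ ∑ s : Fin m, (J s).card := by
        calc m = ∑ _s : Fin m, 1 := by simp
        _ ≤ _ := Finset.sum_le_sum fun s _ => Finset.card_pos.2 (hne s)
      omega
    · push_neg at hne
      obtain ⟨s, hs⟩ := hne
      refine Finset.prod_eq_zero (Finset.mem_univ s) ?_
      rw [hs, coeff_FP]
      simp
  · rw [if_neg hC]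

/-! ### explicit inverse of `1 + X C c` -/

def Iinv (c : MvPolynomial (Fin r) ℚ) : Rr r := PowerSeries.mk fun k => (-c) ^ k

lemma g_mul_Iinv (c : MvPolynomial (Fin r) ℚ) :
    (1 + PowerSeries.X * PowerSeries.C c) * Iinv c = 1 := by
  have hexp : (1 + PowerSeries.X * PowerSeries.C c) * Iinv c
      = Iinv c + PowerSeries.X * (PowerSeries.C c * Iinv c) := by ring
  rw [hexp]
  ext n
  cases n with
  | zero =>
    simp [Iinv]
  | succ n =>
    rw [map_add, PowerSeries.coeff_succ_X_mul, PowerSeries.coeff_C_mul, Iinv,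
      PowerSeries.coeff_mk, PowerSeries.coeff_mk, PowerSeries.coeff_one]
    rw [if_neg (Nat.succ_ne_zero n), pow_succ]
    ring

def gUnit (c : MvPolynomial (Fin r) ℚ) : (Rr r)ˣ :=
  Units.mkOfMulEqOne _ _ (g_mul_Iinv c)

lemma inverse_g (c : MvPolynomial (Fin r) ℚ) :
    Ring.inverse (1 + PowerSeries.X * PowerSeries.C c) = Iinv c := by
  have h := Ring.inverse_unit (gUnit c)
  exact h

lemma ospFactor_eq (S : Finset (Fin r)) :
    ospFactor S = gS S ^ S.card * (Iinv (cS S)) ^ 2 := by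
  rw [ospFactor, inverse_g (∑ j ∈ S, MvPolynomial.X j)]
  rfl

lemma cS_empty : cS (∅ : Finset (Fin r)) = 0 := by simp [cS]

lemma gS_empty : gS (∅ : Finset (Fin r)) = 1 := by
  simp [gS, cS_empty]

lemma Iinv_zero : Iinv (0 : MvPolynomial (Fin r) ℚ) = 1 := by
  ext n
  cases n with
  | zero => simp [Iinv]
  | succ n => simp [Iinv, PowerSeries.coeff_one]

lemma ospFactor_empty : ospFactor (∅ : Finset (Fin r)) = 1 := by
  rw [ospFactor_eq, cS_empty, Iinv_zero, gS_empty]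
  simp

/-! ### substitution `w_i ↦ 0` -/

def φq (i : Fin r) : MvPolynomial (Fin r) ℚ →+* MvPolynomial (Fin r) ℚ :=
  (MvPolynomial.aeval (fun j => if j = i then 0 else MvPolynomial.X j)).toRingHom

def φR (i : Fin r) : Rr r →+* Rr r := PowerSeries.map (φq i)

lemma φq_X_self (i : Fin r) : φq i (MvPolynomial.X i) = 0 := by simp [φq]

lemma φq_X_ne {i j : Fin r} (h : j ≠ i) : φq i (MvPolynomial.X j) = MvPolynomial.X j := by
  simp [φq, h]

lemma φq_cS {i : Fin r} {S : Finset (Fin r)} (h : i ∉ S) : φq i (cS S) = cS S := by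
  rw [cS, map_sum]
  exact Finset.sum_congr rfl fun j hj => φq_X_ne (by rintro rfl; exact h hj)

lemma φq_cS_insert {i : Fin r} {T : Finset (Fin r)} (h : i ∉ T) :
    φq i (cS (insert i T)) = cS T := by
  rw [cS, Finset.sum_insert h, map_add, φq_X_self, zero_add, ← cS, φq_cS h]

lemma φR_C (i : Fin r) (c : MvPolynomial (Fin r) ℚ) :
    φR i (PowerSeries.C c) = PowerSeries.C (φq i c) := by
  simp [φR]

lemma φR_g (i : Fin r) (c : MvPolynomial (Fin r) ℚ) :
    φR i (1 + PowerSeries.X * PowerSeries.C c)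
      = 1 + PowerSeries.X * PowerSeries.C (φq i c) := by
  rw [map_add, map_one, map_mul, φR_C]
  congr 1
  rw [φR, PowerSeries.map_X]

lemma φR_Iinv (i : Fin r) (c : MvPolynomial (Fin r) ℚ) :
    φR i (Iinv c) = Iinv (φq i c) := by
  ext n
  rw [φR, PowerSeries.coeff_map, Iinv, Iinv, PowerSeries.coeff_mk, PowerSeries.coeff_mk,
    map_pow, map_neg]

lemma φR_gS {i : Fin r} {S : Finset (Fin r)} (h : i ∉ S) : φR i (gS S) = gS S := by
  rw [gS, φR_g, φq_cS h]

lemma φR_ospFactor_not_mem {i : Fin r} {S : Finset (Fin r)} (h : i ∉ S) :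
    φR i (ospFactor S) = ospFactor S := by
  rw [ospFactor_eq, map_mul, map_pow, map_pow, φR_Iinv, φq_cS h, φR_gS h, ← ospFactor_eq]

lemma φR_ospFactor_insert {i : Fin r} {T : Finset (Fin r)} (h : i ∉ T) :
    φR i (ospFactor (insert i T)) = ospFactor T * gS T := by
  have h1 : φR i (gS (insert i T)) = gS T := by
    rw [gS, φR_g, φq_cS_insert h, ← gS]
  rw [ospFactor_eq, map_mul, map_pow, map_pow, φR_Iinv, φq_cS_insert h, h1,
    Finset.card_insert_of_notMem h, ospFactor_eq, pow_succ]
  ring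

/-! ### derivations -/

def Mop (i : Fin r) : Pr r →+* Pr r := MvPolynomial.map (φR i)

def Dop (i : Fin r) (p : Pr r) : Pr r := Mop i (MvPolynomial.pderiv i p)

def Eop (p : Pr r) : Pr r :=
  ∑ j : Fin r, MvPolynomial.C (PowerSeries.X * PowerSeries.C
      (MvPolynomial.X j)) * (MvPolynomial.X j * MvPolynomial.pderiv j p)

lemma Dop_add (i : Fin r) (p q : Pr r) : Dop i (p + q) = Dop i p + Dop i q := by
  rw [Dop, Dop, Dop, map_add, map_add]

lemma Eop_add (p q : Pr r) : Eop (p + q) = Eop p + Eop q := by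
  rw [Eop, Eop, Eop, ← Finset.sum_add_distrib]
  refine Finset.sum_congr rfl fun j _ => ?_
  rw [map_add]
  ring

lemma Dop_mul (i : Fin r) (p q : Pr r) :
    Dop i (p * q) = Dop i p * Mop i q + Mop i p * Dop i q := by
  rw [Dop, Dop, Dop, MvPolynomial.pderiv_mul, map_add, map_mul, map_mul]

lemma Eop_mul (p q : Pr r) : Eop (p * q) = Eop p * q + p * Eop q := by
  rw [Eop, Eop, Eop, Finset.sum_mul, Finset.mul_sum, ← Finset.sum_add_distrib]
  refine Finset.sum_congr rfl fun j _ => ?_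
  rw [MvPolynomial.pderiv_mul]
  ring

lemma Dop_pow (i : Fin r) (p : Pr r) (n : ℕ) :
    Dop i (p ^ (n + 1)) = (n + 1) • ((Mop i p) ^ n * Dop i p) := by
  induction n with
  | zero => simp
  | succ n ih =>
    rw [pow_succ, Dop_mul, ih, map_pow]
    rw [smul_mul_assoc]
    have h1 : Mop i p ^ n * Dop i p * Mop i p = Mop i p ^ (n + 1) * Dop i p := by
      rw [pow_succ]; ring
    rw [h1]
    exact (succ_nsmul (Mop i p ^ (n + 1) * Dop i p) (n + 1)).symm

lemma Eop_pow (p : Pr r) (n : ℕ) :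
    Eop (p ^ (n + 1)) = (n + 1) • (p ^ n * Eop p) := by
  induction n with
  | zero => simp
  | succ n ih =>
    rw [pow_succ, Eop_mul, ih]
    rw [smul_mul_assoc]
    have h1 : p ^ n * Eop p * p = p ^ (n + 1) * Eop p := by
      rw [pow_succ]; ring
    rw [h1]
    exact (succ_nsmul (p ^ (n + 1) * Eop p) (n + 1)).symm

lemma ind_insert {i : Fin r} {T : Finset (Fin r)} (h : i ∉ T) :
    ind (insert i T) = ind T + Finsupp.single i 1 := by
  rw [ind, Finset.sum_insert h, add_comm]
  rfl

lemma ind_insert_sub {i : Fin r} {T : Finset (Fin r)} (h : i ∉ T) :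
    ind (insert i T) - Finsupp.single i 1 = ind T := by
  rw [ind_insert h]
  ext j
  rw [Finsupp.tsub_apply, Finsupp.add_apply]
  omega

lemma coeff_Dop {i : Fin r} {T : Finset (Fin r)} (h : i ∉ T) (p : Pr r) :
    MvPolynomial.coeff (ind T) (Dop i p)
      = φR i (MvPolynomial.coeff (ind (insert i T)) p) := by
  induction p using MvPolynomial.induction_on' with
  | add p q hp hq =>
    rw [Dop_add, MvPolynomial.coeff_add, MvPolynomial.coeff_add, map_add, hp, hq]
  | monomial s a =>
    rw [Dop, Mop, MvPolynomial.pderiv_monomial, MvPolynomial.map_monomial,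
      MvPolynomial.coeff_monomial, MvPolynomial.coeff_monomial]
    by_cases hs : s = ind (insert i T)
    · subst hs
      have hi1 : ind (insert i T) i = 1 := by
        rw [ind_apply, if_pos (Finset.mem_insert_self i T)]
      rw [if_pos (ind_insert_sub h), if_pos rfl, hi1, map_mul]
      simp
    · rw [if_neg hs]
      by_cases hsub : s - Finsupp.single i 1 = ind T
      · by_cases hzero : s i = 0
        · rw [if_pos hsub, hzero, map_mul]
          simp
        · exfalso
          apply hs
          ext j
          have hj : s j - Finsupp.single i 1 j = ind T j := by
            rw [← Finsupp.tsub_apply, hsub]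
          rw [ind_insert h, Finsupp.add_apply]
          rw [Finsupp.single_apply] at hj ⊢
          by_cases hji : i = j
          · subst hji
            have hT0 : ind T i = 0 := by rw [ind_apply, if_neg h]
            simp only [eq_self_iff_true, if_true] at hj ⊢
            omega
          · simp only [if_neg hji] at hj ⊢
            omega
      · rw [if_neg hsub, map_zero]

lemma coeff_Eop (T : Finset (Fin r)) (p : Pr r) :
    MvPolynomial.coeff (ind T) (Eop p)
      = (PowerSeries.X * PowerSeries.C (cS T)) * MvPolynomial.coeff (ind T) p := by
  induction p using MvPolynomial.induction_on' with
  | add p q hp hq =>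
    rw [Eop_add, MvPolynomial.coeff_add, MvPolynomial.coeff_add, hp, hq]
    ring
  | monomial s a =>
    rw [Eop, MvPolynomial.coeff_sum]
    have hterm : ∀ j : Fin r,
        MvPolynomial.coeff (ind T)
          (MvPolynomial.C (PowerSeries.X * PowerSeries.C
              (MvPolynomial.X j)) *
            (MvPolynomial.X j * MvPolynomial.pderiv j (MvPolynomial.monomial s a)))
        = if s = ind T then
            (PowerSeries.X * PowerSeries.C (MvPolynomial.X j))
              * (a * (s j : Rr r)) else 0 := by
      intro j
      rw [MvPolynomial.pderiv_monomial, MvPolynomial.coeff_C_mul]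
      have hX : MvPolynomial.X j * MvPolynomial.monomial (s - Finsupp.single j 1) (a * (s j : Rr r))
          = MvPolynomial.monomial (Finsupp.single j 1 + (s - Finsupp.single j 1)) (a * (s j : Rr r)) := by
        have hXj : (MvPolynomial.X j : Pr r)
            = MvPolynomial.monomial (Finsupp.single j 1) 1 := rfl
        rw [hXj, MvPolynomial.monomial_mul, one_mul]
      rw [hX, MvPolynomial.coeff_monomial]
      by_cases hzero : s j = 0
      · rw [hzero]
        simp
      · have hrec : Finsupp.single j 1 + (s - Finsupp.single j 1) = s := by
          ext u
          rw [Finsupp.add_apply, Finsupp.tsub_apply, Finsupp.single_apply]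
          by_cases hu : j = u
          · subst hu
            have hz : s j ≠ 0 := hzero
            simp only [eq_self_iff_true, if_true]
            omega
          · simp only [if_neg hu]
            omega
        rw [hrec]
        by_cases hs : s = ind T
        · rw [if_pos hs, if_pos hs]
        · rw [if_neg hs, if_neg hs, mul_zero]
    rw [Finset.sum_congr rfl fun j _ => hterm j]
    rw [MvPolynomial.coeff_monomial]
    by_cases hs : s = ind T
    · subst hs
      simp only [eq_self_iff_true, if_true]
      have hterm2 : ∀ j : Fin r,
          (PowerSeries.X * PowerSeries.C (MvPolynomial.X j))
              * (a * ((ind T j : ℕ) : Rr r))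
            = if j ∈ T then
                (PowerSeries.X * PowerSeries.C (MvPolynomial.X j)) * a
              else 0 := by
        intro j
        rw [ind_apply]
        by_cases hj : j ∈ T
        · rw [if_pos hj, if_pos hj]
          norm_num
        · rw [if_neg hj, if_neg hj]
          norm_num
      rw [Finset.sum_congr rfl fun j _ => hterm2 j, Finset.sum_ite_mem, Finset.univ_inter]
      rw [cS, map_sum, Finset.mul_sum, Finset.sum_mul]
    · rw [if_neg hs, mul_zero]
      exact Finset.sum_eq_zero fun j _ => by rw [if_neg hs]

/-! ### the logarithm polynomial -/

def qc (r m : ℕ) : Rr r := PowerSeries.C (MvPolynomial.C ((-1 : ℚ) ^ (m + 1) / m))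

def LP (r : ℕ) : Pr r := ∑ m ∈ Finset.Icc 1 r, MvPolynomial.C (qc r m) * FP r ^ m

lemma Cq_smul (q : ℚ) (z : Rr r) :
    PowerSeries.C (MvPolynomial.C q) * z = q • z := by
  rw [Algebra.smul_def]
  congr 1
  all_goals simp [PowerSeries.algebraMap_apply, MvPolynomial.algebraMap_eq]

lemma φR_qc (i : Fin r) (m : ℕ) : φR i (qc r m) = qc r m := by
  rw [qc, φR, PowerSeries.map_C]
  congr 1
  simp [φq]

lemma coeff_one_of_nonempty {T : Finset (Fin r)} (hT : T.Nonempty) :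
    MvPolynomial.coeff (ind T) (1 : Pr r) = 0 := by
  rw [MvPolynomial.coeff_one]
  refine if_neg fun h => ?_
  obtain ⟨x, hx⟩ := hT
  have h3 : ind T = 0 := by
    first
    | exact h
    | exact h.symm
  have h2 : ind T x = 0 := by rw [h3]; rfl
  rw [ind_apply, if_pos hx] at h2
  exact one_ne_zero h2

lemma Kcong_mul {T : Finset (Fin r)} {p p' q q' : Pr r}
    (hp : ∀ A ⊆ T, MvPolynomial.coeff (ind A) p = MvPolynomial.coeff (ind A) p')
    (hq : ∀ A ⊆ T, MvPolynomial.coeff (ind A) q = MvPolynomial.coeff (ind A) q') :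
    ∀ A ⊆ T, MvPolynomial.coeff (ind A) (p * q) = MvPolynomial.coeff (ind A) (p' * q') := by
  intro A hA
  rw [K1, K1]
  refine Finset.sum_congr rfl fun B hB => ?_
  rw [Finset.mem_powerset] at hB
  rw [hp B (hB.trans hA), hq (A \ B) ((Finset.sdiff_subset).trans hA)]

lemma Dop_sum {α : Type} (i : Fin r) (s : Finset α) (f : α → Pr r) :
    Dop i (∑ x ∈ s, f x) = ∑ x ∈ s, Dop i (f x) := by
  classical
  induction s using Finset.induction_on with
  | empty => simp [Dop]
  | insert _ _ h ih => rw [Finset.sum_insert h, Finset.sum_insert h, Dop_add, ih]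

lemma Eop_sum {α : Type} (s : Finset α) (f : α → Pr r) :
    Eop (∑ x ∈ s, f x) = ∑ x ∈ s, Eop (f x) := by
  classical
  induction s using Finset.induction_on with
  | empty => simp [Eop]
  | insert _ _ h ih => rw [Finset.sum_insert h, Finset.sum_insert h, Eop_add, ih]

lemma Dop_C_mul (i : Fin r) (c : Rr r) (p : Pr r) :
    Dop i (MvPolynomial.C c * p) = MvPolynomial.C (φR i c) * Dop i p := by
  rw [Dop, MvPolynomial.pderiv_C_mul, Dop, Mop, map_mul, MvPolynomial.map_C]

lemma Eop_C_mul (c : Rr r) (p : Pr r) :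
    Eop (MvPolynomial.C c * p) = MvPolynomial.C c * Eop p := by
  rw [Eop, Eop, Finset.mul_sum]
  refine Finset.sum_congr rfl fun j _ => ?_
  rw [MvPolynomial.pderiv_C_mul]
  ring

lemma qc_mul_nsmul {m : ℕ} (hm : 1 ≤ m) (z : Rr r) :
    qc r m * (m • z) = ((-1 : ℚ) ^ (m + 1)) • z := by
  rw [qc, Cq_smul, ← Nat.cast_smul_eq_nsmul ℚ, smul_smul]
  congr 1
  have hm0 : (m : ℚ) ≠ 0 := Nat.cast_ne_zero.2 (by omega)
  field_simp

/-- The central computation: under `coeff (ind T)`, `Dop i` of `LP` agrees with `Eop` of `LP`. -/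
lemma coeff_Dop_LP {i : Fin r} {T : Finset (Fin r)} (hiT : i ∉ T) (hT : T.Nonempty) :
    MvPolynomial.coeff (ind T) (Dop i (LP r))
      = MvPolynomial.coeff (ind T) (Eop (LP r)) := by
  classical
  have hr0 : 0 < r := Nat.pos_of_ne_zero fun h => by subst h; exact i.elim0
  have hTcard : T.card < r := by
    have hsub : T ⊆ Finset.univ.erase i := by
      intro x hx
      exact Finset.mem_erase.2 ⟨fun hxi => hiT (hxi ▸ hx), Finset.mem_univ x⟩
    have h1 := Finset.card_le_card hsub
    rw [Finset.card_erase_of_mem (Finset.mem_univ i), Finset.card_univ, Fintype.card_fin] at h1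
    omega
  have hM : ∀ A ⊆ T, MvPolynomial.coeff (ind A) (Mop i (FP r))
      = MvPolynomial.coeff (ind A) (FP r) := by
    intro A hA
    have hiA : i ∉ A := fun h => hiT (hA h)
    rw [Mop, MvPolynomial.coeff_map, coeff_FP]
    by_cases hAne : A.Nonempty
    · rw [if_pos hAne, φR_ospFactor_not_mem hiA]
    · rw [if_neg hAne, map_zero]
  have hD : ∀ A ⊆ T, MvPolynomial.coeff (ind A) (Dop i (FP r))
      = MvPolynomial.coeff (ind A) (1 + FP r + Eop (FP r)) := by
    intro A hA
    have hiA : i ∉ A := fun h => hiT (hA h)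
    rw [coeff_Dop hiA, coeff_FP, MvPolynomial.coeff_add, MvPolynomial.coeff_add,
      coeff_FP, coeff_Eop, coeff_FP]
    rw [if_pos (Finset.insert_nonempty i A), φR_ospFactor_insert hiA]
    by_cases hAne : A.Nonempty
    · rw [if_pos hAne, coeff_one_of_nonempty hAne, gS]
      ring
    · rw [Finset.not_nonempty_iff_eq_empty] at hAne
      subst hAne
      rw [if_neg (by simp), ospFactor_empty, gS_empty, ind_empty, cS_empty]
      simp
  have hpowc : ∀ (n : ℕ), ∀ A ⊆ T,
      MvPolynomial.coeff (ind A) ((Mop i (FP r)) ^ n)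
        = MvPolynomial.coeff (ind A) ((FP r) ^ n) := by
    intro n
    induction n with
    | zero => intro A _; rfl
    | succ n ih =>
      intro A hA
      rw [pow_succ, pow_succ]
      exact Kcong_mul ih hM A hA
  rw [LP, Dop_sum, Eop_sum, MvPolynomial.coeff_sum, MvPolynomial.coeff_sum,
    ← Finset.Ico_add_one_right_eq_Icc, Finset.sum_Ico_eq_sum_range, Finset.sum_Ico_eq_sum_range]
  simp only [Nat.add_sub_cancel]
  have key : ∀ n ∈ Finset.range r,
      MvPolynomial.coeff (ind T) (Dop i (MvPolynomial.C (qc r (1+n)) * FP r ^ (1+n)))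
        = (((-1:ℚ)^n) • MvPolynomial.coeff (ind T) (FP r ^ n)
            - ((-1:ℚ)^(n+1)) • MvPolynomial.coeff (ind T) (FP r ^ (n+1)))
          + MvPolynomial.coeff (ind T) (Eop (MvPolynomial.C (qc r (1+n)) * FP r ^ (1+n))) := by
    intro n _
    have h1n : 1 + n = n + 1 := by omega
    rw [h1n, Dop_C_mul, MvPolynomial.coeff_C_mul, φR_qc, Dop_pow, MvPolynomial.coeff_smul,
      qc_mul_nsmul (by omega), Eop_C_mul, MvPolynomial.coeff_C_mul, Eop_pow,
      MvPolynomial.coeff_smul, qc_mul_nsmul (by omega)]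
    have hc : MvPolynomial.coeff (ind T) (Mop i (FP r) ^ n * Dop i (FP r))
        = MvPolynomial.coeff (ind T) (FP r ^ n * (1 + FP r + Eop (FP r))) :=
      Kcong_mul (hpowc n) hD T (subset_refl T)
    rw [hc]
    have hexp : FP r ^ n * (1 + FP r + Eop (FP r))
        = FP r ^ n + FP r ^ (n+1) + FP r ^ n * Eop (FP r) := by
      rw [pow_succ]; ring
    rw [hexp, MvPolynomial.coeff_add, MvPolynomial.coeff_add, smul_add, smul_add]
    have he : ((-1:ℚ)^(n+1+1)) = (-1:ℚ)^n := by
      rw [pow_succ, pow_succ]; ring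
    rw [he]
    have he2 : ∀ z : Rr r, ((-1:ℚ)^n) • z = -(((-1:ℚ)^(n+1)) • z) := by
      intro z
      have h3 : ((-1:ℚ)^(n+1)) = ((-1:ℚ)^n) * (-1) := by rw [pow_succ]
      rw [h3, mul_comm, mul_smul, neg_one_smul, neg_neg]
    rw [he2 (MvPolynomial.coeff (ind T) (FP r ^ (n+1)))]
    abel
  rw [Finset.sum_congr rfl key, Finset.sum_add_distrib,
    Finset.sum_range_sub' (fun n => ((-1:ℚ)^n) • MvPolynomial.coeff (ind T) (FP r ^ n)) r]
  have hb0 : ((-1:ℚ)^0) • MvPolynomial.coeff (ind T) (FP r ^ 0) = 0 := by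
    rw [pow_zero, pow_zero, one_smul]
    exact coeff_one_of_nonempty hT
  have hbr : ((-1:ℚ)^r) • MvPolynomial.coeff (ind T) (FP r ^ r) = 0 := by
    rw [coeff_FP_pow_eq_zero hTcard, smul_zero]
  rw [hb0, hbr, sub_self, zero_add]

lemma H2 {i : Fin r} {T : Finset (Fin r)} (hiT : i ∉ T) (hT : T.Nonempty) :
    φR i (MvPolynomial.coeff (ind (insert i T)) (LP r))
      = (PowerSeries.X * PowerSeries.C (cS T)) * MvPolynomial.coeff (ind T) (LP r) := by
  rw [← coeff_Dop hiT, coeff_Dop_LP hiT hT, coeff_Eop]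

/-! ### homogeneity -/

def HomSer (ψ : Rr r) : Prop :=
  ∀ k, (PowerSeries.coeff (R := MvPolynomial (Fin r) ℚ) k ψ).IsHomogeneous k

lemma HomSer_one : HomSer (1 : Rr r) := by
  intro k
  rw [PowerSeries.coeff_one]
  split_ifs with h
  · subst h; exact MvPolynomial.isHomogeneous_one _ _
  · exact MvPolynomial.isHomogeneous_zero _ _ _

lemma HomSer_zero : HomSer (0 : Rr r) := by
  intro k
  rw [map_zero]
  exact MvPolynomial.isHomogeneous_zero _ _ _

lemma HomSer.mul {a b : Rr r} (ha : HomSer a) (hb : HomSer b) : HomSer (a * b) := by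
  intro k
  rw [PowerSeries.coeff_mul]
  refine MvPolynomial.IsHomogeneous.sum _ _ _ fun x hx => ?_
  rw [Finset.HasAntidiagonal.mem_antidiagonal] at hx
  have := (ha x.1).mul (hb x.2)
  rwa [hx] at this

lemma HomSer.pow {a : Rr r} (ha : HomSer a) (n : ℕ) : HomSer (a ^ n) := by
  induction n with
  | zero => rw [pow_zero]; exact HomSer_one
  | succ n ih => rw [pow_succ]; exact ih.mul ha

lemma cS_hom (S : Finset (Fin r)) : (cS S).IsHomogeneous 1 :=
  MvPolynomial.IsHomogeneous.sum _ _ _ fun j _ => MvPolynomial.isHomogeneous_X _ _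

lemma HomSer_gS (S : Finset (Fin r)) : HomSer (gS S) := by
  intro k
  rw [gS, map_add]
  cases k with
  | zero =>
    rw [PowerSeries.coeff_zero_X_mul, PowerSeries.coeff_one]
    norm_num
    exact MvPolynomial.isHomogeneous_one _ _
  | succ k =>
    rw [PowerSeries.coeff_succ_X_mul, PowerSeries.coeff_one, PowerSeries.coeff_C]
    rw [if_neg (Nat.succ_ne_zero k), zero_add]
    split_ifs with h
    · subst h; simpa using cS_hom S
    · exact MvPolynomial.isHomogeneous_zero _ _ _

lemma HomSer_Iinv {c : MvPolynomial (Fin r) ℚ} (hc : c.IsHomogeneous 1) :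
    HomSer (Iinv c) := by
  intro k
  rw [Iinv, PowerSeries.coeff_mk]
  simpa using (hc.neg).pow k

lemma HomSer_ospFactor (S : Finset (Fin r)) : HomSer (ospFactor S) := by
  rw [ospFactor_eq]
  exact ((HomSer_gS S).pow _).mul ((HomSer_Iinv (cS_hom S)).pow 2)

lemma HomSer_sum {α : Type} (s : Finset α) (f : α → Rr r) (h : ∀ x ∈ s, HomSer (f x)) :
    HomSer (∑ x ∈ s, f x) :=
  Finset.sum_induction f HomSer (fun a b ha hb k => (ha k).add (hb k)) HomSer_zero h

lemma HomSer_prod {α : Type} (s : Finset α) (f : α → Rr r) (h : ∀ x ∈ s, HomSer (f x)) :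
    HomSer (∏ x ∈ s, f x) :=
  Finset.prod_induction f HomSer (fun a b ha hb => ha.mul hb) HomSer_one h

lemma HomSer_coeff_FP_pow (m : ℕ) (S : Finset (Fin r)) :
    HomSer (MvPolynomial.coeff (ind S) (FP r ^ m)) := by
  rw [Kpow]
  refine HomSer_sum _ _ fun J _ => ?_
  split_ifs with h
  · refine HomSer_prod _ _ fun s _ => ?_
    rw [coeff_FP]
    split_ifs with h2
    · exact HomSer_ospFactor _
    · exact HomSer_zero
  · exact HomSer_zero

lemma HomSer_qc (m : ℕ) : HomSer (qc r m) := by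
  intro k
  rw [qc, PowerSeries.coeff_C]
  split_ifs with h
  · subst h; exact MvPolynomial.isHomogeneous_C _ _
  · exact MvPolynomial.isHomogeneous_zero _ _ _

lemma HomSer_coeff_LP (S : Finset (Fin r)) :
    HomSer (MvPolynomial.coeff (ind S) (LP r)) := by
  rw [LP, MvPolynomial.coeff_sum]
  refine HomSer_sum _ _ fun m _ => ?_
  rw [MvPolynomial.coeff_C_mul]
  exact (HomSer_qc m).mul (HomSer_coeff_FP_pow m S)

/-! ### the vanishing criterion -/

lemma φq_monomial (i : Fin r) (s : Fin r →₀ ℕ) (a : ℚ) :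
    φq i (MvPolynomial.monomial s a)
      = if s i = 0 then MvPolynomial.monomial s a else 0 := by
  have h0 : φq i (MvPolynomial.monomial s a)
      = MvPolynomial.C a * s.prod fun j e => (if j = i then 0 else MvPolynomial.X j) ^ e := by
    rw [φq]
    erw [MvPolynomial.aeval_monomial]
    rw [MvPolynomial.algebraMap_eq]
  rw [h0]
  by_cases h : s i = 0
  · rw [if_pos h, MvPolynomial.monomial_eq]
    congr 1
    refine Finset.prod_congr rfl fun j hj => ?_
    have hji : j ≠ i := by
      rintro rfl
      rw [Finsupp.mem_support_iff] at hj
      exact hj h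
    simp only [if_neg hji]
  · rw [if_neg h]
    have hi : i ∈ s.support := Finsupp.mem_support_iff.2 h
    rw [Finsupp.prod, Finset.prod_eq_zero hi, mul_zero]
    rw [if_pos rfl]
    exact zero_pow h

lemma coeff_φq {i : Fin r} {m : Fin r →₀ ℕ} (h : m i = 0) (Q : MvPolynomial (Fin r) ℚ) :
    MvPolynomial.coeff m (φq i Q) = MvPolynomial.coeff m Q := by
  induction Q using MvPolynomial.induction_on' with
  | add p q hp hq =>
    rw [map_add, MvPolynomial.coeff_add, MvPolynomial.coeff_add, hp, hq]
  | monomial s a =>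
    rw [φq_monomial]
    by_cases hs : s i = 0
    · rw [if_pos hs]
    · rw [if_neg hs, MvPolynomial.coeff_zero, MvPolynomial.coeff_monomial,
        if_neg (fun hsm => hs (by rw [hsm, h]))]

lemma vanish {Q : MvPolynomial (Fin r) ℚ} {S : Finset (Fin r)} {k : ℕ}
    (hk : k < S.card) (hQ : Q.IsHomogeneous k) (h0 : ∀ i ∈ S, φq i Q = 0) : Q = 0 := by
  classical
  apply MvPolynomial.ext
  intro m
  rw [MvPolynomial.coeff_zero]
  by_cases hex : ∃ i ∈ S, m i = 0
  · obtain ⟨i, hiS, hmi⟩ := hex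
    rw [← coeff_φq hmi Q, h0 i hiS, MvPolynomial.coeff_zero]
  · push_neg at hex
    by_contra hc
    have hdeg := hQ hc
    replace hdeg : Finsupp.degree m = k := by
      rw [Finsupp.degree_eq_weight_one (R := ℕ)]; exact hdeg
    have hsub : S ⊆ m.support := fun i hi => Finsupp.mem_support_iff.2 (hex i hi)
    have hge : S.card ≤ Finsupp.degree m := by
      calc S.card = ∑ _i ∈ S, 1 := by simp
      _ ≤ ∑ i ∈ S, m i := Finset.sum_le_sum fun i hi => by
          have := hex i hi; omega
      _ ≤ ∑ i ∈ m.support, m i := Finset.sum_le_sum_of_subset hsub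
      _ = Finsupp.degree m := rfl
    omega

/-! ### the main induction -/

lemma ML : ∀ (n : ℕ) (S : Finset (Fin r)), S.card = n → ∀ k, k + 2 ≤ n →
    PowerSeries.coeff (R := MvPolynomial (Fin r) ℚ) k (MvPolynomial.coeff (ind S) (LP r)) = 0 := by
  intro n
  induction n using Nat.strong_induction_on with
  | _ n ih =>
    intro S hS k hk
    refine vanish (S := S) (k := k) (by omega) (HomSer_coeff_LP S k) ?_
    intro i hi
    have hiT : i ∉ S.erase i := fun h => (Finset.mem_erase.1 h).1 rfl
    have hTcard : (S.erase i).card = n - 1 := by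
      rw [Finset.card_erase_of_mem hi, hS]
    have hTne : (S.erase i).Nonempty := by
      rw [← Finset.card_pos, hTcard]; omega
    have hins : insert i (S.erase i) = S := Finset.insert_erase hi
    have hφ : φq i (PowerSeries.coeff (R := MvPolynomial (Fin r) ℚ) k
        (MvPolynomial.coeff (ind S) (LP r)))
        = PowerSeries.coeff (R := MvPolynomial (Fin r) ℚ) k
            (φR i (MvPolynomial.coeff (ind S) (LP r))) := by
      rw [φR, PowerSeries.coeff_map]
    rw [hφ, ← hins, H2 hiT hTne]
    cases k with
    | zero =>
      rw [mul_assoc, PowerSeries.coeff_zero_X_mul]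
    | succ k =>
      rw [mul_assoc, PowerSeries.coeff_succ_X_mul, PowerSeries.coeff_C_mul]
      rw [ih (n-1) (by omega) (S.erase i) hTcard k (by omega), mul_zero]

end

end OSP1

open OSP1 in
theorem statement1 (r : ℕ) (hr : 1 ≤ r) (p : ℕ) (hp2 : 2 ≤ p) (hpr : p ≤ r) :
    ∑ m ∈ Finset.Icc 1 r, (((-1 : ℚ) ^ m / m) •
        ∑ I ∈ Finset.univ.filter (fun I : Fin m → Finset (Fin r) => IsOSP I),
          PowerSeries.coeff (R := MvPolynomial (Fin r) ℚ) (r - p) (∏ s, ospFactor (I s)))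
      = 0 := by
  classical
  have hbridge : ∀ m : ℕ, (∑ I ∈ Finset.univ.filter (fun I : Fin m → Finset (Fin r) => IsOSP I),
      ∏ s, ospFactor (I s)) = MvPolynomial.coeff (ind Finset.univ) (FP r ^ m) := by
    intro m
    rw [Kpow, Finset.sum_filter]
    refine Finset.sum_congr rfl fun J _ => ?_
    by_cases hosp : IsOSP J
    · rw [if_pos hosp, if_pos ⟨hosp.2.1, hosp.2.2⟩]
      refine (Finset.prod_congr rfl fun s _ => ?_).symm
      rw [coeff_FP, if_pos (hosp.1 s)]
    · rw [if_neg hosp]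
      by_cases hcond : Cond J Finset.univ
      · rw [if_pos hcond]
        have hne : ¬ (∀ s, (J s).Nonempty) := fun hall => hosp ⟨hall, hcond.1, hcond.2⟩
        push_neg at hne
        obtain ⟨s, hs⟩ := hne
        refine (Finset.prod_eq_zero (Finset.mem_univ s) ?_).symm
        rw [hs, coeff_FP]
        simp
      · rw [if_neg hcond]
  have hmain : PowerSeries.coeff (R := MvPolynomial (Fin r) ℚ) (r - p)
      (MvPolynomial.coeff (ind Finset.univ) (LP r)) = 0 := by
    refine ML r Finset.univ ?_ (r - p) (by omega)
    rw [Finset.card_univ, Fintype.card_fin]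
  have hterm : ∀ m ∈ Finset.Icc 1 r,
      (((-1 : ℚ) ^ m / m) •
        ∑ I ∈ Finset.univ.filter (fun I : Fin m → Finset (Fin r) => IsOSP I),
          PowerSeries.coeff (R := MvPolynomial (Fin r) ℚ) (r - p) (∏ s, ospFactor (I s)))
      = -(PowerSeries.coeff (R := MvPolynomial (Fin r) ℚ) (r - p)
            (MvPolynomial.coeff (ind Finset.univ) (MvPolynomial.C (qc r m) * FP r ^ m))) := by
    intro m _
    rw [← map_sum (PowerSeries.coeff (R := MvPolynomial (Fin r) ℚ) (r - p)), hbridge m,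
      ← PowerSeries.coeff_smul, MvPolynomial.coeff_C_mul, qc, Cq_smul, ← map_neg, ← neg_smul]
    congr 2
    rw [pow_succ]
    field_simp
  rw [Finset.sum_congr rfl hterm]
  rw [Finset.sum_neg_distrib, ← map_sum (PowerSeries.coeff (R := MvPolynomial (Fin r) ℚ) (r - p)),
    ← MvPolynomial.coeff_sum, ← LP, hmain]
  simp
end

section
/- Define H_r(w_1,...,w_r) = Σ_{m=1}^{r} ((-1)^m/(24m)) Σ_{(I_(1),...,I_(m))} ∏_{s=1}^m (1 + Σ_{j∈I_(s)} w_j)^{|I_(s)|-2}, where the inner sum is over ordered set partitions of [r] into m nonempty blocks. Then H_r(w_1,...,w_{r-1},0) = (w_1 + ··· + w_{r-1})·H_{r-1}(w_1,...,w_{r-1}). -/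
open Classical

/-- `H_r(w_1,…,w_r) = Σ_{m=1}^r ((-1)^m/(24m)) Σ_{(I_1,…,I_m)} Π_s (1+Σ_{j∈I_s} w_j)^{|I_s|-2}`,
the inner sum running over ordered set partitions of `[r]` into `m` nonempty blocks; the
(possibly negative) exponents are integer powers in the field `K`. -/
noncomputable def Hfun {K : Type*} [Field K] (r : ℕ) (w : Fin r → K) : K :=
  ∑ m ∈ Finset.Icc 1 r, ((-1 : K) ^ m / (24 * m)) *
    ∑ I ∈ Finset.univ.filter (fun I : Fin m → Finset (Fin r) => IsOSP I),
      ∏ s, (1 + ∑ j ∈ I s, w j) ^ (((I s).card : ℤ) - 2)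

open Finset

noncomputable def Sfun {K : Type*} [Field K] (r m : ℕ) (w : Fin r → K) : K :=
  ∑ I ∈ Finset.univ.filter (fun I : Fin m → Finset (Fin r) => IsOSP I),
      ∏ s, (1 + ∑ j ∈ I s, w j) ^ (((I s).card : ℤ) - 2)

lemma Hfun_eq {K : Type*} [Field K] (r : ℕ) (w : Fin r → K) :
    Hfun r w = ∑ m ∈ Finset.Icc 1 r, ((-1 : K) ^ m / (24 * m)) * Sfun r m w := rfl

/-! ### up/down machinery -/

def emb (r : ℕ) : Fin r ↪ Fin (r + 1) := ⟨Fin.castSucc, Fin.castSucc_injective r⟩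

lemma mem_map_emb {r : ℕ} {A : Finset (Fin r)} {j : Fin (r + 1)} :
    j ∈ A.map (emb r) ↔ ∃ i ∈ A, Fin.castSucc i = j := by
  simp [emb, Finset.mem_map]

lemma last_not_mem_map {r : ℕ} (A : Finset (Fin r)) : Fin.last r ∉ A.map (emb r) := by
  rw [mem_map_emb]
  rintro ⟨i, -, hi⟩
  exact (Fin.castSucc_lt_last i).ne hi

noncomputable def fdown {r : ℕ} (B : Finset (Fin (r + 1))) : Finset (Fin r) :=
  B.preimage Fin.castSucc ((Fin.castSucc_injective r).injOn)

lemma mem_fdown {r : ℕ} {B : Finset (Fin (r + 1))} {i : Fin r} :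
    i ∈ fdown B ↔ i.castSucc ∈ B := Finset.mem_preimage

lemma fdown_map {r : ℕ} (A : Finset (Fin r)) : fdown (A.map (emb r)) = A := by
  ext i
  simp only [mem_fdown, mem_map_emb]
  constructor
  · rintro ⟨a, ha, h⟩
    rwa [← (Fin.castSucc_injective r) h]
  · intro h; exact ⟨i, h, rfl⟩

lemma map_fdown {r : ℕ} {B : Finset (Fin (r + 1))} (h : Fin.last r ∉ B) :
    (fdown B).map (emb r) = B := by
  ext j
  rw [mem_map_emb]
  constructor
  · rintro ⟨i, hi, rfl⟩; exact mem_fdown.1 hi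
  · intro hj
    have hjne : j ≠ Fin.last r := fun hh => h (hh ▸ hj)
    obtain ⟨i, rfl⟩ := Fin.exists_castSucc_eq.mpr hjne
    exact ⟨i, mem_fdown.2 hj, rfl⟩

lemma card_fdown {r : ℕ} {B : Finset (Fin (r + 1))} (h : Fin.last r ∉ B) :
    (fdown B).card = B.card := by
  conv_rhs => rw [← map_fdown h]
  simp [Finset.card_map]

lemma sum_map_emb {K : Type*} [Field K] {r : ℕ} (w : Fin r → K) (A : Finset (Fin r)) :
    ∑ j ∈ A.map (emb r), Fin.snoc w (0 : K) j = ∑ i ∈ A, w i := by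
  rw [Finset.sum_map]
  exact Finset.sum_congr rfl fun i _ => by simp [emb]

lemma sum_fdown {K : Type*} [Field K] {r : ℕ} (w : Fin r → K) {B : Finset (Fin (r + 1))}
    (h : Fin.last r ∉ B) : ∑ j ∈ B, Fin.snoc w (0 : K) j = ∑ i ∈ fdown B, w i := by
  conv_lhs => rw [← map_fdown h]
  exact sum_map_emb w _

lemma sum_erase_last {K : Type*} [Field K] {r : ℕ} (w : Fin r → K) (B : Finset (Fin (r + 1))) :
    ∑ j ∈ B, Fin.snoc w (0 : K) j = ∑ j ∈ B.erase (Fin.last r), Fin.snoc w (0 : K) j := by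
  by_cases h : Fin.last r ∈ B
  · rw [← Finset.add_sum_erase _ _ h]
    simp
  · rw [Finset.erase_eq_of_notMem h]

/-! ### vanishing lemmas -/

lemma card_sum_of_OSP {r m : ℕ} {I : Fin m → Finset (Fin r)} (h : IsOSP I) :
    ∑ s, (I s).card = r := by
  obtain ⟨h1, h2, h3⟩ := h
  have := Finset.card_biUnion (s := (Finset.univ : Finset (Fin m))) (t := I)
    (fun s _ t _ hst => h2 s t hst)
  rw [h3] at this
  simpa using this.symm

lemma Sfun_eq_zero {K : Type*} [Field K] {r m : ℕ} (h : r < m) (w : Fin r → K) :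
    Sfun r m w = 0 := by
  rw [Sfun]
  apply Finset.sum_eq_zero
  intro I hI
  exfalso
  rw [Finset.mem_filter] at hI
  have hc := card_sum_of_OSP hI.2
  have : (m : ℕ) ≤ ∑ s : Fin m, (I s).card := by
    calc m = ∑ _s : Fin m, 1 := by simp
    _ ≤ _ := Finset.sum_le_sum fun s _ => Finset.card_pos.2 (hI.2.1 s)
  omega

lemma Sfun_zero_eq_zero {K : Type*} [Field K] {r : ℕ} (hr : 1 ≤ r) (w : Fin r → K) :
    Sfun r 0 w = 0 := by
  rw [Sfun]
  apply Finset.sum_eq_zero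
  intro I hI
  exfalso
  rw [Finset.mem_filter] at hI
  have hc := card_sum_of_OSP hI.2
  simp at hc
  omega

section CaseDev
variable {K : Type*} [Field K] {r : ℕ}

noncomputable def fK (w : Fin r → K) (B : Finset (Fin (r + 1))) : K :=
  (1 + ∑ j ∈ B, Fin.snoc w (0 : K) j) ^ ((B.card : ℤ) - 2)

noncomputable def gK (w : Fin r → K) (A : Finset (Fin r)) : K :=
  (1 + ∑ j ∈ A, w j) ^ ((A.card : ℤ) - 2)

lemma fdown_nonempty {B : Finset (Fin (r + 1))} (h1 : B.Nonempty) (h2 : Fin.last r ∉ B) :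
    (fdown B).Nonempty := by
  obtain ⟨x, hx⟩ := h1
  have hxne : x ≠ Fin.last r := fun hh => h2 (hh ▸ hx)
  obtain ⟨i, rfl⟩ := Fin.exists_castSucc_eq.mpr hxne
  exact ⟨i, mem_fdown.2 hx⟩

lemma fdown_disjoint {B C : Finset (Fin (r + 1))} (h : Disjoint B C) :
    Disjoint (fdown B) (fdown C) := by
  rw [Finset.disjoint_left] at h ⊢
  intro i hi hi'
  exact h (mem_fdown.1 hi) (mem_fdown.1 hi')

lemma fK_eq_gK (w : Fin r → K) {B : Finset (Fin (r + 1))} (h : Fin.last r ∉ B) :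
    fK w B = gK w (fdown B) := by
  rw [fK, gK, sum_fdown w h, card_fdown h]

lemma caseA (w : Fin r → K) {n : ℕ} (s : Fin (n + 1)) :
    ∑ I ∈ Finset.univ.filter
        (fun I : Fin (n + 1) → Finset (Fin (r + 1)) =>
          (IsOSP I ∧ Fin.last r ∈ I s) ∧ I s = {Fin.last r}),
      ∏ t, fK w (I t) = Sfun r n w := by
  rw [Sfun]
  refine Finset.sum_nbij'
    (fun I => fun u : Fin n => fdown (I (s.succAbove u)))
    (fun I' => Fin.insertNth (α := fun _ => Finset (Fin (r+1))) s {Fin.last r} (fun u => (I' u).map (emb r)))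
    ?_ ?_ ?_ ?_ ?_
  · -- maps into OSP(r,n)
    intro I hI
    rw [Finset.mem_filter] at hI ⊢
    obtain ⟨-, ⟨⟨h1, h2, h3⟩, -⟩, hs⟩ := hI
    refine ⟨Finset.mem_univ _, ?_, ?_, ?_⟩
    · intro u
      have hne := Fin.succAbove_ne s u
      refine fdown_nonempty (h1 _) ?_
      intro hmem
      have hd := h2 s (s.succAbove u) hne.symm
      rw [Finset.disjoint_left] at hd
      exact hd (hs ▸ Finset.mem_singleton_self _) hmem
    · intro u u' huu'
      exact fdown_disjoint (h2 _ _ (fun hh => huu' (Fin.succAbove_right_injective hh)))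
    · ext i
      simp only [Finset.mem_biUnion, Finset.mem_univ, true_iff, iff_true, true_and]
      have : i.castSucc ∈ Finset.univ.biUnion I := h3 ▸ Finset.mem_univ _
      obtain ⟨t, -, ht⟩ := Finset.mem_biUnion.1 this
      have htne : t ≠ s := by
        rintro rfl
        rw [hs, Finset.mem_singleton] at ht
        exact (Fin.castSucc_lt_last i).ne ht
      obtain ⟨u, rfl⟩ := Fin.exists_succAbove_eq htne
      exact ⟨u, mem_fdown.2 ht⟩
  · -- j maps into domain
    intro I' hI'
    simp only [Finset.mem_filter, Finset.mem_univ, true_and] at hI' ⊢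
    obtain ⟨h1, h2, h3⟩ := hI'
    have hself : Fin.insertNth (α := fun _ => Finset (Fin (r+1))) s {Fin.last r} (fun u => (I' u).map (emb r)) s = {Fin.last r} :=
      Fin.insertNth_apply_same _ _ _
    have habove : ∀ u, Fin.insertNth (α := fun _ => Finset (Fin (r+1))) s {Fin.last r} (fun u => (I' u).map (emb r)) (s.succAbove u)
        = (I' u).map (emb r) := fun u => Fin.insertNth_apply_succAbove _ _ _ _
    have hosp : IsOSP (Fin.insertNth (α := fun _ => Finset (Fin (r+1))) s {Fin.last r} (fun u => (I' u).map (emb r))) := by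
      refine ⟨?_, ?_, ?_⟩
      · intro t
        rcases eq_or_ne t s with rfl | hts
        · rw [hself]; exact Finset.singleton_nonempty _
        · obtain ⟨u, rfl⟩ := Fin.exists_succAbove_eq hts
          rw [habove]
          exact (h1 u).map
      · intro t t' htt'
        rcases eq_or_ne t s with rfl | hts
        · obtain ⟨u, rfl⟩ := Fin.exists_succAbove_eq (Ne.symm htt')
          rw [hself, habove, Finset.disjoint_singleton_left]
          exact last_not_mem_map _
        · obtain ⟨u, rfl⟩ := Fin.exists_succAbove_eq hts
          rcases eq_or_ne t' s with rfl | hts'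
          · rw [hself, habove, Finset.disjoint_singleton_right]
            exact last_not_mem_map _
          · obtain ⟨u', rfl⟩ := Fin.exists_succAbove_eq hts'
            rw [habove, habove, Finset.disjoint_map]
            exact h2 u u' (fun hh => htt' (hh ▸ rfl))
      · ext x
        simp only [Finset.mem_biUnion, Finset.mem_univ, true_iff, iff_true, true_and]
        rcases eq_or_ne x (Fin.last r) with rfl | hx
        · exact ⟨s, by simp only [hself]; exact Finset.mem_singleton_self _⟩
        · obtain ⟨i, rfl⟩ := Fin.exists_castSucc_eq.mpr hx
          have : i ∈ Finset.univ.biUnion I' := h3 ▸ Finset.mem_univ _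
          obtain ⟨u, -, hu⟩ := Finset.mem_biUnion.1 this
          exact ⟨s.succAbove u, by simp only [habove]; exact mem_map_emb.2 ⟨i, hu, rfl⟩⟩
    exact ⟨⟨hosp, by rw [hself]; exact Finset.mem_singleton_self _⟩, hself⟩
  · -- left inverse
    intro I hI
    rw [Finset.mem_filter] at hI
    obtain ⟨-, ⟨⟨h1, h2, h3⟩, -⟩, hs⟩ := hI
    funext t
    dsimp only
    rcases eq_or_ne t s with rfl | hts
    · rw [Fin.insertNth_apply_same, hs]
    · obtain ⟨u, rfl⟩ := Fin.exists_succAbove_eq hts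
      rw [Fin.insertNth_apply_succAbove]
      refine map_fdown ?_
      intro hmem
      have hd := h2 s (s.succAbove u) (Fin.succAbove_ne s u).symm
      rw [Finset.disjoint_left] at hd
      exact hd (hs ▸ Finset.mem_singleton_self _) hmem
  · -- right inverse
    intro I' hI'
    funext u
    rw [Fin.insertNth_apply_succAbove, fdown_map]
  · -- values
    intro I hI
    rw [Finset.mem_filter] at hI
    obtain ⟨-, ⟨⟨h1, h2, h3⟩, -⟩, hs⟩ := hI
    rw [Fin.prod_univ_succAbove (fun t => fK w (I t)) s]
    have hfs : fK w (I s) = 1 := by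
      rw [hs, fK]
      simp
    rw [hfs, one_mul]
    refine Finset.prod_congr rfl fun u _ => ?_
    refine fK_eq_gK w ?_
    intro hmem
    have hd := h2 s (s.succAbove u) (Fin.succAbove_ne s u).symm
    rw [Finset.disjoint_left] at hd
    exact hd (hs ▸ Finset.mem_singleton_self _) hmem

end CaseDev

section CaseB
variable {K : Type*} [Field K] {r : ℕ}

lemma erase_last_of_osp {m : ℕ} {I : Fin m → Finset (Fin (r + 1))} (h2 : ∀ s t, s ≠ t → Disjoint (I s) (I t))
    {s t : Fin m} (hls : Fin.last r ∈ I s) (hts : t ≠ s) : Fin.last r ∉ I t := by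
  intro hmem
  have hd := h2 s t (Ne.symm hts)
  rw [Finset.disjoint_left] at hd
  exact hd hls hmem

lemma caseB (w : Fin r → K) (hw : ∀ S : Finset (Fin r), S.Nonempty → 1 + ∑ j ∈ S, w j ≠ 0)
    {m : ℕ} (s : Fin m) :
    ∑ I ∈ Finset.univ.filter
        (fun I : Fin m → Finset (Fin (r + 1)) =>
          (IsOSP I ∧ Fin.last r ∈ I s) ∧ ¬ I s = {Fin.last r}),
      ∏ t, fK w (I t) =
    ∑ I' ∈ Finset.univ.filter (fun I' : Fin m → Finset (Fin r) => IsOSP I'),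
      (1 + ∑ j ∈ I' s, w j) * ∏ t, gK w (I' t) := by
  refine Finset.sum_nbij'
    (fun I => fun t => fdown ((I t).erase (Fin.last r)))
    (fun I' => fun t => if t = s then insert (Fin.last r) ((I' t).map (emb r)) else (I' t).map (emb r))
    ?_ ?_ ?_ ?_ ?_
  · -- forward membership
    intro I hI
    simp only [Finset.mem_filter, Finset.mem_univ, true_and] at hI ⊢
    obtain ⟨⟨⟨h1, h2, h3⟩, hls⟩, hne⟩ := hI
    refine ⟨?_, ?_, ?_⟩
    · intro t
      dsimp only
      rcases eq_or_ne t s with rfl | hts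
      · -- I s minus last is nonempty
        have : ∃ x ∈ I t, x ≠ Fin.last r := by
          by_contra hcon
          push_neg at hcon
          exact hne (Finset.eq_singleton_iff_unique_mem.2 ⟨hls, hcon⟩)
        obtain ⟨x, hx, hxne⟩ := this
        exact fdown_nonempty ⟨x, Finset.mem_erase.2 ⟨hxne, hx⟩⟩ (fun hh => (Finset.mem_erase.1 hh).1 rfl)
      · rw [Finset.erase_eq_of_notMem (erase_last_of_osp h2 hls hts)]
        exact fdown_nonempty (h1 t) (erase_last_of_osp h2 hls hts)
    · intro t t' htt'
      exact fdown_disjoint ((h2 t t' htt').mono (Finset.erase_subset _ _) (Finset.erase_subset _ _))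
    · ext i
      simp only [Finset.mem_biUnion, Finset.mem_univ, true_iff, iff_true, true_and]
      have : i.castSucc ∈ Finset.univ.biUnion I := h3 ▸ Finset.mem_univ _
      obtain ⟨t, -, ht⟩ := Finset.mem_biUnion.1 this
      exact ⟨t, mem_fdown.2 (Finset.mem_erase.2 ⟨(Fin.castSucc_lt_last i).ne, ht⟩)⟩
  · -- backward membership
    intro I' hI'
    simp only [Finset.mem_filter, Finset.mem_univ, true_and] at hI' ⊢
    obtain ⟨h1, h2, h3⟩ := hI'
    have hlastmem : Fin.last r ∈ (if s = s then insert (Fin.last r) ((I' s).map (emb r)) else (I' s).map (emb r)) := by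
      rw [if_pos rfl]; exact Finset.mem_insert_self _ _
    refine ⟨⟨⟨?_, ?_, ?_⟩, by simpa using hlastmem⟩, ?_⟩
    · intro t
      dsimp only
      rcases eq_or_ne t s with rfl | hts
      · simp only [eq_self_iff_true, if_true]; exact Finset.insert_nonempty _ _
      · rw [if_neg hts]; exact (h1 t).map
    · intro t t' htt'
      dsimp only
      rcases eq_or_ne t s with rfl | hts
      · rw [if_neg (Ne.symm htt')]
        simp only [eq_self_iff_true, if_true, Finset.disjoint_insert_left]
        exact ⟨last_not_mem_map _, (Finset.disjoint_map _).2 (h2 _ _ htt')⟩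
      · rcases eq_or_ne t' s with rfl | hts'
        · rw [if_neg hts]
          simp only [eq_self_iff_true, if_true, Finset.disjoint_insert_right]
          exact ⟨last_not_mem_map _, (Finset.disjoint_map _).2 (h2 _ _ htt')⟩
        · rw [if_neg hts, if_neg hts', Finset.disjoint_map _]
          exact h2 _ _ htt'
    · ext x
      simp only [Finset.mem_biUnion, Finset.mem_univ, true_iff, iff_true, true_and]
      rcases eq_or_ne x (Fin.last r) with rfl | hx
      · exact ⟨s, by simpa using hlastmem⟩
      · obtain ⟨i, rfl⟩ := Fin.exists_castSucc_eq.mpr hx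
        have : i ∈ Finset.univ.biUnion I' := h3 ▸ Finset.mem_univ _
        obtain ⟨u, -, hu⟩ := Finset.mem_biUnion.1 this
        refine ⟨u, ?_⟩
        rcases eq_or_ne u s with rfl | hus
        · simp only [eq_self_iff_true, if_true]
          exact Finset.mem_insert_of_mem (mem_map_emb.2 ⟨i, hu, rfl⟩)
        · rw [if_neg hus]
          exact mem_map_emb.2 ⟨i, hu, rfl⟩
    · -- not singleton
      intro hsing
      simp only [eq_self_iff_true, if_true] at hsing
      obtain ⟨x, hx⟩ := h1 s
      have : x.castSucc ∈ insert (Fin.last r) ((I' s).map (emb r)) :=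
        Finset.mem_insert_of_mem (mem_map_emb.2 ⟨x, hx, rfl⟩)
      rw [hsing, Finset.mem_singleton] at this
      exact (Fin.castSucc_lt_last x).ne this
  · -- left inverse
    intro I hI
    simp only [Finset.mem_filter, Finset.mem_univ, true_and] at hI
    obtain ⟨⟨⟨h1, h2, h3⟩, hls⟩, hne⟩ := hI
    funext t
    dsimp only
    rcases eq_or_ne t s with rfl | hts
    · simp only [eq_self_iff_true, if_true]
      rw [map_fdown (fun hh => (Finset.mem_erase.1 hh).1 rfl), Finset.insert_erase hls]
    · rw [if_neg hts, Finset.erase_eq_of_notMem (erase_last_of_osp h2 hls hts),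
        map_fdown (erase_last_of_osp h2 hls hts)]
  · -- right inverse
    intro I' hI'
    funext t
    dsimp only
    rcases eq_or_ne t s with rfl | hts
    · simp only [eq_self_iff_true, if_true]
      rw [Finset.erase_insert (last_not_mem_map _), fdown_map]
    · rw [if_neg hts, Finset.erase_eq_of_notMem (last_not_mem_map _), fdown_map]
  · -- values
    intro I hI
    simp only [Finset.mem_filter, Finset.mem_univ, true_and] at hI
    obtain ⟨⟨⟨h1, h2, h3⟩, hls⟩, hne⟩ := hI
    have hnl : ∀ t, t ≠ s → Fin.last r ∉ I t := fun t ht => erase_last_of_osp h2 hls ht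
    have hXne : (fdown ((I s).erase (Fin.last r))).Nonempty := by
      have : ∃ x ∈ I s, x ≠ Fin.last r := by
        by_contra hcon
        push_neg at hcon
        exact hne (Finset.eq_singleton_iff_unique_mem.2 ⟨hls, hcon⟩)
      obtain ⟨x, hx, hxne⟩ := this
      exact fdown_nonempty ⟨x, Finset.mem_erase.2 ⟨hxne, hx⟩⟩ (fun hh => (Finset.mem_erase.1 hh).1 rfl)
    rw [← Finset.mul_prod_erase Finset.univ (fun t => fK w (I t)) (Finset.mem_univ s),
      ← Finset.mul_prod_erase Finset.univ
        (fun t => gK w ((fun I => fun t => fdown ((I t).erase (Fin.last r))) I t)) (Finset.mem_univ s)]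
    have hrest : ∀ t ∈ Finset.univ.erase s, fK w (I t)
        = gK w (fdown ((I t).erase (Fin.last r))) := by
      intro t ht
      have hts := (Finset.mem_erase.1 ht).1
      rw [Finset.erase_eq_of_notMem (hnl t hts)]
      exact fK_eq_gK w (hnl t hts)
    rw [Finset.prod_congr rfl hrest]
    dsimp only
    set X : K := ∑ j ∈ fdown ((I s).erase (Fin.last r)), w j with hX
    have hsum : ∑ j ∈ I s, Fin.snoc w (0 : K) j = X := by
      rw [sum_erase_last, sum_fdown w (fun hh => (Finset.mem_erase.1 hh).1 rfl)]
    have hcard : (I s).card = (fdown ((I s).erase (Fin.last r))).card + 1 := by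
      rw [card_fdown (fun hh => (Finset.mem_erase.1 hh).1 rfl), Finset.card_erase_add_one hls]
    have hfs : fK w (I s) = (1 + X) * gK w (fdown ((I s).erase (Fin.last r))) := by
      rw [fK, gK, hsum, hcard]
      have h0 : (1 : K) + X ≠ 0 := hw _ hXne
      push_cast
      rw [show ((fdown ((I s).erase (Fin.last r))).card : ℤ) + 1 - 2
          = ((fdown ((I s).erase (Fin.last r))).card - 2) + 1 by ring,
        zpow_add_one₀ h0]
      ring
    rw [hfs]
    ring
end CaseB

section KeyLemma
variable {K : Type*} [Field K] {r : ℕ}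

lemma sum_blocks_eq {m : ℕ} (w : Fin r → K) {I' : Fin m → Finset (Fin r)} (h : IsOSP I') :
    ∑ s, ∑ j ∈ I' s, w j = ∑ j, w j := by
  obtain ⟨h1, h2, h3⟩ := h
  rw [show (Finset.univ : Finset (Fin r)) = Finset.univ.biUnion I' from h3.symm,
    Finset.sum_biUnion]
  intro x _ y _ hxy
  exact h2 x y hxy

lemma Sfun_succ (w : Fin r → K)
    (hw : ∀ S : Finset (Fin r), S.Nonempty → 1 + ∑ j ∈ S, w j ≠ 0) (n : ℕ) :
    Sfun (r + 1) (n + 1) (Fin.snoc w 0) =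
      ((n : K) + 1) * Sfun r n w + (((n : K) + 1) + ∑ j, w j) * Sfun r (n + 1) w := by
  have hstep1 : Sfun (r + 1) (n + 1) (Fin.snoc w 0) =
      ∑ s : Fin (n + 1), ∑ I ∈ Finset.univ.filter
          (fun I : Fin (n + 1) → Finset (Fin (r + 1)) => IsOSP I ∧ Fin.last r ∈ I s),
        ∏ t, fK w (I t) := by
    rw [Sfun]
    have : ∀ I ∈ Finset.univ.filter (fun I : Fin (n + 1) → Finset (Fin (r + 1)) => IsOSP I),
        (∏ t, (1 + ∑ j ∈ I t, Fin.snoc w (0 : K) j) ^ (((I t).card : ℤ) - 2)) =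
        ∑ s : Fin (n + 1), if Fin.last r ∈ I s then ∏ t, fK w (I t) else 0 := by
      intro I hI
      simp only [Finset.mem_filter, Finset.mem_univ, true_and] at hI
      obtain ⟨h1, h2, h3⟩ := hI
      have : Fin.last r ∈ Finset.univ.biUnion I := h3 ▸ Finset.mem_univ _
      obtain ⟨s₀, -, hs₀⟩ := Finset.mem_biUnion.1 this
      rw [Finset.sum_eq_single_of_mem s₀ (Finset.mem_univ _) ?_]
      · rw [if_pos hs₀]; rfl
      · intro b _ hb
        rw [if_neg]
        intro hmem
        have hd := h2 s₀ b (Ne.symm hb)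
        rw [Finset.disjoint_left] at hd
        exact hd hs₀ hmem
    rw [Finset.sum_congr rfl this, Finset.sum_comm]
    refine Finset.sum_congr rfl fun s _ => ?_
    rw [← Finset.sum_filter, Finset.filter_filter]
  rw [hstep1]
  have hstep2 : ∀ s : Fin (n + 1),
      ∑ I ∈ Finset.univ.filter
          (fun I : Fin (n + 1) → Finset (Fin (r + 1)) => IsOSP I ∧ Fin.last r ∈ I s),
        ∏ t, fK w (I t) =
      Sfun r n w + ∑ I' ∈ Finset.univ.filter (fun I' : Fin (n + 1) → Finset (Fin r) => IsOSP I'),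
        (1 + ∑ j ∈ I' s, w j) * ∏ t, gK w (I' t) := by
    intro s
    rw [← Finset.sum_filter_add_sum_filter_not
      (Finset.univ.filter (fun I : Fin (n + 1) → Finset (Fin (r + 1)) => IsOSP I ∧ Fin.last r ∈ I s))
      (fun I => I s = {Fin.last r}) (fun I => ∏ t, fK w (I t)),
      Finset.filter_filter, Finset.filter_filter, caseA w s, caseB w hw s]
  rw [Finset.sum_congr rfl (fun s _ => hstep2 s), Finset.sum_add_distrib, Finset.sum_const,
    Finset.card_univ, Fintype.card_fin, Finset.sum_comm]
  congr 1
  · rw [nsmul_eq_mul]; push_cast; ring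
  · rw [Sfun, Finset.mul_sum]
    refine Finset.sum_congr rfl fun I' hI' => ?_
    simp only [Finset.mem_filter, Finset.mem_univ, true_and] at hI'
    rw [← Finset.sum_mul, Finset.sum_add_distrib, Finset.sum_const, Finset.card_univ,
      Fintype.card_fin, sum_blocks_eq w hI', nsmul_eq_mul]
    have : ∀ t, gK w (I' t) = (1 + ∑ j ∈ I' t, w j) ^ (((I' t).card : ℤ) - 2) := fun t => rfl
    push_cast
    ring_nf
    rfl
end KeyLemma

theorem statement2 (K : Type*) [Field K] [CharZero K] (r : ℕ) (hr : 1 ≤ r)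
    (w : Fin r → K)
    (hw : ∀ S : Finset (Fin r), S.Nonempty → 1 + ∑ j ∈ S, w j ≠ 0) :
    Hfun (r + 1) (Fin.snoc w 0) = (∑ j, w j) * Hfun r w := by
  rw [Hfun_eq, Hfun_eq]
  have hIcc : (Finset.Icc 1 (r + 1)) = Finset.Ico 1 (r + 2) := by
    exact (Finset.Ico_add_one_right_eq_Icc ..).symm
  rw [hIcc, Finset.sum_Ico_eq_sum_range]
  have hsub : r + 2 - 1 = r + 1 := rfl
  rw [hsub]
  have h24 : (24 : K) ≠ 0 := by norm_num
  have hterm : ∀ k ∈ Finset.range (r + 1),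
      ((-1 : K) ^ (1 + k) / (24 * ((1 + k : ℕ) : K))) * Sfun (r + 1) (1 + k) (Fin.snoc w 0)
      = ((((-1 : K) ^ (k + 1) / 24) * Sfun r (k + 1) w - ((-1 : K) ^ k / 24) * Sfun r k w)
        + (∑ j, w j) * (((-1 : K) ^ (1 + k) / (24 * ((1 + k : ℕ) : K))) * Sfun r (1 + k) w)) := by
    intro k _
    rw [Nat.add_comm 1 k, Sfun_succ w hw k]
    have h1 : ((k : K) + 1) ≠ 0 := Nat.cast_add_one_ne_zero k
    push_cast
    field_simp
    ring
  rw [Finset.sum_congr rfl hterm, Finset.sum_add_distrib,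
    Finset.sum_range_sub (fun k => ((-1 : K) ^ k / 24) * Sfun r k w)]
  have hz1 : Sfun r (r + 1) w = (0 : K) := Sfun_eq_zero (Nat.lt_succ_self r) w
  have hz0 : Sfun r 0 w = (0 : K) := Sfun_zero_eq_zero hr w
  rw [hz1, hz0]
  have hrest : ∑ k ∈ Finset.range (r + 1),
      (∑ j, w j) * (((-1 : K) ^ (1 + k) / (24 * ((1 + k : ℕ) : K))) * Sfun r (1 + k) w)
      = (∑ j, w j) * ∑ m ∈ Finset.Icc 1 r, ((-1 : K) ^ m / (24 * (m : K))) * Sfun r m w := by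
    rw [← Finset.mul_sum]
    congr 1
    have := Finset.sum_Ico_eq_sum_range
      (fun m => ((-1 : K) ^ m / (24 * (m : K))) * Sfun r m w) 1 (r + 2)
    rw [hsub] at this
    rw [← this, ← Finset.Ico_add_one_right_eq_Icc, Finset.sum_Ico_succ_top (by omega : 1 ≤ r + 1)]
    rw [show Finset.Ico 1 (r + 1) = Finset.Icc 1 r by rw [Finset.Ico_add_one_right_eq_Icc], hz1]
    ring
  rw [hrest]
  ring
end

section
/- In the formal power series expansion of H_r(w_1,...,w_r) = Σ_{m=1}^{r} ((-1)^m/(24m)) Σ_{ordered set partitions of [r] into m blocks} ∏_{s=1}^m (1 + Σ_{j∈I_(s)} w_j)^{|I_(s)|-2} around w=0, the coefficient of the monomial w_1·w_2···w_r equals (r-1)!/24. -/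
open Classical

/-- The factor `(1 + Σ_{j∈S} w_j)^{|S|-2}` as a multivariate power series in the `w_j`
over `ℚ`, written `(1+c)^{|S|} · ((1+c)⁻¹)^2` via `Ring.inverse` (the base has constant
term `1`, hence is a unit; for singleton blocks this is the geometric series). -/
noncomputable def blockFactor {r : ℕ} (S : Finset (Fin r)) :
    MvPowerSeries (Fin r) ℚ :=
  (1 + ∑ j ∈ S, MvPowerSeries.X j) ^ S.card *
    (Ring.inverse (1 + ∑ j ∈ S, MvPowerSeries.X j)) ^ 2

/-- `H_r = Σ_{m=1}^r ((-1)^m/(24m)) Σ_{ordered set partitions} Π_s (1+Σ_{j∈I_s}w_j)^{|I_s|-2}`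
as a formal power series in `w_1,…,w_r`. -/
noncomputable def Hps (r : ℕ) : MvPowerSeries (Fin r) ℚ :=
  ∑ m ∈ Finset.Icc 1 r, ((-1 : ℚ) ^ m / (24 * m)) •
    ∑ I ∈ Finset.univ.filter (fun I : Fin m → Finset (Fin r) => IsOSP I),
      ∏ s, blockFactor (I s)

section Aux

variable {r : ℕ}

/-- The series `1 + Σ_{j∈S} X j`. -/
noncomputable def sigA (S : Finset (Fin r)) : MvPowerSeries (Fin r) ℚ :=
  1 + ∑ j ∈ S, MvPowerSeries.X j

/-- `f` only involves variables in `S`. -/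
def SuppOn (S : Finset (Fin r)) (f : MvPowerSeries (Fin r) ℚ) : Prop :=
  ∀ d : Fin r →₀ ℕ, MvPowerSeries.coeff d f ≠ 0 → ∀ j, d j ≠ 0 → j ∈ S

/-- total degree of an exponent. -/
def wsum (d : Fin r →₀ ℕ) : ℕ := ∑ j, d j

lemma wsum_add (x y : Fin r →₀ ℕ) : wsum (x + y) = wsum x + wsum y := by
  simp [wsum, Finset.sum_add_distrib]

lemma wsum_single (a : Fin r) : wsum (Finsupp.single a 1) = 1 := by
  simp [wsum, Finsupp.single_apply]

lemma wsum_pos {x : Fin r →₀ ℕ} (hx : x ≠ 0) : 0 < wsum x := by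
  obtain ⟨j, hj⟩ := Finsupp.ne_iff.mp hx
  simp only [Finsupp.coe_zero, Pi.zero_apply] at hj
  calc 0 < x j := Nat.pos_of_ne_zero hj
    _ ≤ wsum x := Finset.single_le_sum (fun i _ => Nat.zero_le _) (Finset.mem_univ j)

lemma SuppOn.mono {S T : Finset (Fin r)} {f} (h : SuppOn S f) (hST : S ⊆ T) : SuppOn T f :=
  fun d hd j hj => hST (h d hd j hj)

lemma suppOn_one {S : Finset (Fin r)} : SuppOn S 1 := by
  intro d hd j hj
  rw [MvPowerSeries.coeff_one] at hd
  split_ifs at hd with h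
  · subst h; simp at hj
  · exact absurd rfl hd

lemma SuppOn.mul {S : Finset (Fin r)} {f g} (hf : SuppOn S f) (hg : SuppOn S g) :
    SuppOn S (f * g) := by
  intro d hd j hj
  rw [MvPowerSeries.coeff_mul] at hd
  obtain ⟨p, hp, hne⟩ := Finset.exists_ne_zero_of_sum_ne_zero hd
  rw [Finset.HasAntidiagonal.mem_antidiagonal] at hp
  have hj' : p.1 j ≠ 0 ∨ p.2 j ≠ 0 := by
    by_contra h
    push_neg at h
    apply hj
    rw [← hp, Finsupp.add_apply, h.1, h.2]
  rcases hj' with h | h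
  · exact hf _ (left_ne_zero_of_mul hne) _ h
  · exact hg _ (right_ne_zero_of_mul hne) _ h

lemma SuppOn.pow {S : Finset (Fin r)} {f} (hf : SuppOn S f) (k : ℕ) : SuppOn S (f ^ k) := by
  induction k with
  | zero => simpa using suppOn_one
  | succ n ih => rw [pow_succ]; exact ih.mul hf

lemma SuppOn.prod {S : Finset (Fin r)} {ι : Type*} {t : Finset ι}
    {f : ι → MvPowerSeries (Fin r) ℚ} (hf : ∀ i ∈ t, SuppOn S (f i)) :
    SuppOn S (∏ i ∈ t, f i) :=
  Finset.prod_induction f (SuppOn S) (fun _ _ => SuppOn.mul) suppOn_one hf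

lemma suppOn_of_mul_eq_one {S : Finset (Fin r)} {f g : MvPowerSeries (Fin r) ℚ}
    (h0 : MvPowerSeries.coeff 0 f = 1) (hfg : f * g = 1) (hf : SuppOn S f) : SuppOn S g := by
  suffices H : ∀ n (d : Fin r →₀ ℕ), wsum d = n → ∀ j, d j ≠ 0 → j ∉ S →
      MvPowerSeries.coeff d g = 0 by
    intro d hd j hj
    by_contra hjS
    exact hd (H _ d rfl j hj hjS)
  intro n
  induction n using Nat.strong_induction_on with
  | _ n ih =>
    intro d hdn j hj hjS
    have hd0 : d ≠ 0 := fun h => hj (by simp [h])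
    have h1 : MvPowerSeries.coeff d (f * g) = 0 := by
      rw [hfg, MvPowerSeries.coeff_one, if_neg hd0]
    rw [MvPowerSeries.coeff_mul] at h1
    have hmem : ((0 : Fin r →₀ ℕ), d) ∈ Finset.HasAntidiagonal.antidiagonal d := by
      rw [Finset.HasAntidiagonal.mem_antidiagonal, zero_add]
    rw [← Finset.add_sum_erase _ _ hmem] at h1
    have hrest : ∀ p ∈ (Finset.HasAntidiagonal.antidiagonal d).erase ((0 : Fin r →₀ ℕ), d),
        MvPowerSeries.coeff p.1 f * MvPowerSeries.coeff p.2 g = 0 := by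
      intro p hp
      obtain ⟨hpne, hpad⟩ := Finset.mem_erase.mp hp
      rw [Finset.HasAntidiagonal.mem_antidiagonal] at hpad
      by_cases hc : MvPowerSeries.coeff p.1 f = 0
      · rw [hc, zero_mul]
      · have hp1 : p.1 ≠ 0 := by
          intro h
          apply hpne
          rw [Prod.ext_iff]
          refine ⟨h, ?_⟩
          rw [← hpad, h, zero_add]
        have hp2j : p.2 j ≠ 0 := by
          have hp1j : p.1 j = 0 := by
            by_contra h
            exact hjS (hf _ hc _ h)
          intro h
          apply hj
          rw [← hpad, Finsupp.add_apply, hp1j, h]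
        have hlt : wsum p.2 < n := by
          rw [← hdn, ← hpad, wsum_add]
          have := wsum_pos hp1
          omega
        rw [ih _ hlt p.2 rfl j hp2j hjS, mul_zero]
    rw [Finset.sum_eq_zero hrest, add_zero] at h1
    simpa [h0] using h1

lemma suppOn_sigA (S : Finset (Fin r)) : SuppOn S (sigA S) := by
  intro d hd j hj
  by_contra hjS
  apply hd
  rw [sigA, map_add, map_sum, MvPowerSeries.coeff_one]
  have hd0 : d ≠ 0 := fun h => hj (by simp [h])
  rw [if_neg hd0, zero_add]
  apply Finset.sum_eq_zero
  intro i hi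
  rw [MvPowerSeries.coeff_X, if_neg]
  intro h
  apply hj
  rw [h, Finsupp.single_apply, if_neg]
  intro h'
  exact hjS (h' ▸ hi)

lemma degle_sigA (S : Finset (Fin r)) (d : Fin r →₀ ℕ)
    (hd : MvPowerSeries.coeff d (sigA S) ≠ 0) : wsum d ≤ 1 := by
  rw [sigA, map_add, map_sum, MvPowerSeries.coeff_one] at hd
  by_contra hw
  apply hd
  have hd0 : d ≠ 0 := by
    intro h
    apply hw
    simp [h, wsum]
  rw [if_neg hd0, zero_add]
  apply Finset.sum_eq_zero
  intro i _
  rw [MvPowerSeries.coeff_X, if_neg]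
  intro h
  apply hw
  rw [h, wsum_single]

lemma degle_sigA_pow (S : Finset (Fin r)) (k : ℕ) (d : Fin r →₀ ℕ)
    (hd : MvPowerSeries.coeff d (sigA S ^ k) ≠ 0) : wsum d ≤ k := by
  induction k generalizing d with
  | zero =>
    rw [pow_zero, MvPowerSeries.coeff_one] at hd
    split_ifs at hd with h
    · simp [h, wsum]
    · exact absurd rfl hd
  | succ n ih =>
    rw [pow_succ, MvPowerSeries.coeff_mul] at hd
    obtain ⟨p, hp, hne⟩ := Finset.exists_ne_zero_of_sum_ne_zero hd
    rw [Finset.HasAntidiagonal.mem_antidiagonal] at hp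
    have h1 := ih _ (left_ne_zero_of_mul hne)
    have h2 := degle_sigA S _ (right_ne_zero_of_mul hne)
    have : wsum p.1 + wsum p.2 = wsum d := by rw [← hp, wsum_add]
    omega

lemma constantCoeff_sigA (S : Finset (Fin r)) :
    MvPowerSeries.constantCoeff (sigA S) = 1 := by simp [sigA]

lemma isUnit_sigA (S : Finset (Fin r)) : IsUnit (sigA S) := by
  rw [MvPowerSeries.isUnit_iff_constantCoeff, constantCoeff_sigA]; exact isUnit_one

lemma sigA_mul_inverse (S : Finset (Fin r)) : sigA S * Ring.inverse (sigA S) = 1 :=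
  Ring.mul_inverse_cancel _ (isUnit_sigA S)

lemma blockFactor_def (S : Finset (Fin r)) :
    blockFactor S = sigA S ^ S.card * (Ring.inverse (sigA S)) ^ 2 := rfl

lemma blockFactor_of_two_le {S : Finset (Fin r)} (h : 2 ≤ S.card) :
    blockFactor S = sigA S ^ (S.card - 2) := by
  rw [blockFactor_def]
  have hc : S.card = (S.card - 2) + 2 := (Nat.sub_add_cancel h).symm
  rw [hc, pow_add, mul_assoc, ← mul_pow, sigA_mul_inverse, one_pow, mul_one,
    Nat.add_sub_cancel]

lemma blockFactor_singleton (a : Fin r) :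
    blockFactor {a} = Ring.inverse (sigA {a}) := by
  rw [blockFactor_def, Finset.card_singleton, pow_one, sq, ← mul_assoc,
    sigA_mul_inverse, one_mul]

lemma constantCoeff_inverse_sigA (S : Finset (Fin r)) :
    MvPowerSeries.coeff 0 (Ring.inverse (sigA S)) = 1 := by
  have := congrArg (MvPowerSeries.constantCoeff) (sigA_mul_inverse S)
  rw [map_mul, constantCoeff_sigA, one_mul, map_one] at this
  rw [MvPowerSeries.coeff_zero_eq_constantCoeff]
  exact this

lemma suppOn_inverse_sigA (S : Finset (Fin r)) : SuppOn S (Ring.inverse (sigA S)) :=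
  suppOn_of_mul_eq_one
    (by rw [MvPowerSeries.coeff_zero_eq_constantCoeff]; exact constantCoeff_sigA S)
    (sigA_mul_inverse S) (suppOn_sigA S)

lemma suppOn_blockFactor (S : Finset (Fin r)) : SuppOn S (blockFactor S) := by
  rw [blockFactor_def]
  exact ((suppOn_sigA S).pow _).mul ((suppOn_inverse_sigA S).pow _)

lemma coeff_single_inverse_sigA (a : Fin r) :
    MvPowerSeries.coeff (Finsupp.single a 1) (Ring.inverse (sigA {a})) = -1 := by
  have hs : sigA {a} = 1 + MvPowerSeries.X a := by rw [sigA, Finset.sum_singleton]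
  have h1 := sigA_mul_inverse {a}
  have h0 := constantCoeff_inverse_sigA {a}
  rw [hs] at h1 h0 ⊢
  have h2 := congrArg (MvPowerSeries.coeff (Finsupp.single a 1)) h1
  rw [add_mul, one_mul, map_add, MvPowerSeries.coeff_one,
    if_neg (by simp : (Finsupp.single a 1 : Fin r →₀ ℕ) ≠ 0)] at h2
  have h3 : MvPowerSeries.coeff (Finsupp.single a 1)
      ((MvPowerSeries.X a * Ring.inverse (1 + MvPowerSeries.X a) : MvPowerSeries (Fin r) ℚ)) = 1 := by
    rw [MvPowerSeries.X, MvPowerSeries.coeff_monomial_mul, if_pos le_rfl, tsub_self, one_mul,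
      ← MvPowerSeries.X, h0]
  rw [h3] at h2
  linarith

lemma coeff_mul_split {A B : Finset (Fin r)} (hAB : Disjoint A B)
    {f g : MvPowerSeries (Fin r) ℚ} (hf : SuppOn A f) (hg : SuppOn B g)
    {x y : Fin r →₀ ℕ} (hx : ∀ j, x j ≠ 0 → j ∈ A) (hy : ∀ j, y j ≠ 0 → j ∈ B) :
    MvPowerSeries.coeff (x + y) (f * g) =
      MvPowerSeries.coeff x f * MvPowerSeries.coeff y g := by
  rw [MvPowerSeries.coeff_mul]
  apply Finset.sum_eq_single_of_mem (x, y) (Finset.HasAntidiagonal.mem_antidiagonal.mpr rfl)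
  intro p hp hpne
  rw [Finset.HasAntidiagonal.mem_antidiagonal] at hp
  by_contra hne
  have hcf := left_ne_zero_of_mul hne
  have hcg := right_ne_zero_of_mul hne
  have hp1 : p.1 = x := by
    ext j
    by_cases hjA : j ∈ A
    · have hyj : y j = 0 := by
        by_contra h
        exact (Finset.disjoint_left.mp hAB hjA) (hy j h)
      have hp2j : p.2 j = 0 := by
        by_contra h
        exact (Finset.disjoint_left.mp hAB hjA) (hg _ hcg j h)
      have := DFunLike.congr_fun hp j
      simp only [Finsupp.add_apply] at this
      omega
    · have : p.1 j = 0 := by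
        by_contra h
        exact hjA (hf _ hcf j h)
      have hxj : x j = 0 := by
        by_contra h
        exact hjA (hx j h)
      rw [this, hxj]
  have hp2 : p.2 = y := by
    have := hp
    rw [hp1] at this
    exact add_left_cancel this
  exact hpne (Prod.ext hp1 hp2)

/-- The squarefree exponent over a finset. -/
noncomputable def esum (s : Finset (Fin r)) : Fin r →₀ ℕ := ∑ j ∈ s, Finsupp.single j 1

lemma esum_apply (s : Finset (Fin r)) (j : Fin r) : esum s j = if j ∈ s then 1 else 0 := by
  rw [esum, Finset.sum_apply']
  simp [Finsupp.single_apply]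

lemma coeff_prod_inv (s : Finset (Fin r)) :
    MvPowerSeries.coeff (esum s) (∏ j ∈ s, Ring.inverse (sigA {j})) = (-1) ^ s.card := by
  induction s using Finset.induction with
  | empty => simp [esum, MvPowerSeries.coeff_zero_eq_constantCoeff]
  | @insert a s ha ih =>
    rw [Finset.prod_insert ha]
    have he : esum (insert a s) = Finsupp.single a 1 + esum s := by
      rw [esum, Finset.sum_insert ha, esum]
    rw [he, coeff_mul_split (Finset.disjoint_singleton_left.mpr ha)
      (suppOn_inverse_sigA {a})
      (SuppOn.prod (fun j hj => (suppOn_inverse_sigA {j}).mono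
        (Finset.singleton_subset_iff.mpr hj)))
      (fun j hj => by
        rw [Finsupp.single_apply] at hj
        simp only [Finset.mem_singleton]
        by_contra h
        exact hj (if_neg (fun h' => h h'.symm)))
      (fun j hj => by
        rw [esum_apply] at hj
        by_contra h
        exact hj (if_neg h))]
    rw [coeff_single_inverse_sigA, ih, Finset.card_insert_of_notMem ha, pow_succ]
    ring

lemma sum_card_osp {m : ℕ} {I : Fin m → Finset (Fin r)} (hI : IsOSP I) :
    ∑ s, (I s).card = r := by
  have := Finset.card_biUnion (s := (Finset.univ : Finset (Fin m))) (t := I)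
    (fun s _ t _ hst => hI.2.1 s t hst)
  rw [hI.2.2] at this
  simpa using this.symm

/-- Case m < r : coefficient vanishes. -/
lemma coeff_osp_zero {m : ℕ} {I : Fin m → Finset (Fin r)} (hI : IsOSP I)
    {t : Fin m} (ht : 2 ≤ (I t).card) :
    MvPowerSeries.coeff (esum Finset.univ) (∏ s, blockFactor (I s)) = 0 := by
  rw [← Finset.mul_prod_erase _ _ (Finset.mem_univ t), blockFactor_of_two_le ht,
    MvPowerSeries.coeff_mul]
  apply Finset.sum_eq_zero
  intro p hp
  rw [Finset.HasAntidiagonal.mem_antidiagonal] at hp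
  by_contra hne
  have hcf := left_ne_zero_of_mul hne
  have hcg := right_ne_zero_of_mul hne
  have hfdeg : wsum p.1 ≤ (I t).card - 2 := degle_sigA_pow _ _ _ hcf
  have hgsupp : ∀ j, p.2 j ≠ 0 → j ∉ I t := by
    intro j hj hjt
    have : SuppOn (I t)ᶜ (∏ s ∈ Finset.univ.erase t, blockFactor (I s)) := by
      apply SuppOn.prod
      intro s hs
      apply (suppOn_blockFactor (I s)).mono
      intro x hx
      rw [Finset.mem_compl]
      exact fun hxt => Finset.disjoint_left.mp
        (hI.2.1 s t (Finset.mem_erase.mp hs).1) hx hxt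
    exact Finset.mem_compl.mp (this _ hcg j hj) hjt
  have hbig : (I t).card ≤ wsum p.1 := by
    have h1 : ∀ j ∈ I t, p.1 j = 1 := by
      intro j hj
      have h2 : p.2 j = 0 := by
        by_contra h
        exact hgsupp j h hj
      have := DFunLike.congr_fun hp j
      simp only [Finsupp.add_apply] at this
      rw [esum_apply, if_pos (Finset.mem_univ j)] at this
      omega
    calc (I t).card = ∑ j ∈ I t, p.1 j := by
          rw [Finset.sum_congr rfl h1, Finset.sum_const, smul_eq_mul, mul_one]
      _ ≤ wsum p.1 := Finset.sum_le_sum_of_subset (Finset.subset_univ _)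
  omega

/-- Case m = r: each block is a singleton. -/
lemma osp_card_one {I : Fin r → Finset (Fin r)} (hI : IsOSP I) (s : Fin r) :
    (I s).card = 1 := by
  have hsum := sum_card_osp hI
  have h1 : ∀ s : Fin r, 1 ≤ (I s).card := fun s => (hI.1 s).card_pos
  by_contra h
  have h2 : 2 ≤ (I s).card := by
    have := h1 s
    omega
  have : ∑ _s : Fin r, 1 < ∑ s, (I s).card :=
    Finset.sum_lt_sum (fun i _ => h1 i) ⟨s, Finset.mem_univ s, by omega⟩
  simp only [Finset.sum_const, Finset.card_univ, Fintype.card_fin, smul_eq_mul, mul_one] at this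
  omega

lemma coeff_osp_r {I : Fin r → Finset (Fin r)} (hI : IsOSP I) :
    MvPowerSeries.coeff (esum Finset.univ) (∏ s, blockFactor (I s)) = (-1) ^ r := by
  choose f hf using fun s => Finset.card_eq_one.mp (osp_card_one hI s)
  have hinj : Function.Injective f := by
    intro s t hst
    by_contra hne
    have hdis := hI.2.1 s t hne
    rw [hf s, hf t, hst] at hdis
    simp at hdis
  have hbij : Function.Bijective f := Finite.injective_iff_bijective.mp hinj
  let e : Fin r ≃ Fin r := Equiv.ofBijective f hbij
  have h1 : ∏ s, blockFactor (I s) = ∏ j, Ring.inverse (sigA {j}) := by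
    rw [show (fun s => blockFactor (I s)) = fun s => Ring.inverse (sigA {f s}) from
      funext fun s => by rw [hf s, blockFactor_singleton]]
    exact e.prod_comp (fun j => Ring.inverse (sigA {j}))
  rw [h1, coeff_prod_inv, Finset.card_univ, Fintype.card_fin]

lemma card_osp_r :
    (Finset.univ.filter (fun I : Fin r → Finset (Fin r) => IsOSP I)).card = r.factorial := by
  have key : (Finset.univ.filter (fun I : Fin r → Finset (Fin r) => IsOSP I)).card
      = (Finset.univ : Finset (Equiv.Perm (Fin r))).card := by
    apply Finset.card_bij'
      (i := fun I hI => Equiv.ofBijective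
        (fun s => (I s).min' (((Finset.mem_filter.mp hI).2).1 s))
        (Finite.injective_iff_bijective.mp (by
          intro s t hst
          dsimp only at hst
          by_contra hne
          have hdis := ((Finset.mem_filter.mp hI).2).2.1 s t hne
          apply Finset.disjoint_left.mp hdis (Finset.min'_mem _ _)
          rw [hst]
          exact Finset.min'_mem _ _)))
      (j := fun π _ => fun s => ({π s} : Finset (Fin r)))
    case hi => intro I hI; exact Finset.mem_univ _
    case hj =>
      intro π hπ
      simp only [Finset.mem_filter, Finset.mem_univ, true_and]
      refine ⟨fun s => Finset.singleton_nonempty _,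
        fun s t hst => ?_, ?_⟩
      · rw [Finset.disjoint_singleton]
        exact fun h => hst (π.injective h)
      · ext j
        simp only [Finset.mem_biUnion, Finset.mem_univ, true_iff, Finset.mem_singleton,
          iff_true]
        exact ⟨π.symm j, trivial, (π.apply_symm_apply j).symm⟩
    case left_inv =>
      intro I hI
      funext s
      obtain ⟨b, hb⟩ := Finset.card_eq_one.mp
        (osp_card_one (Finset.mem_filter.mp hI).2 s)
      simp only [Equiv.ofBijective_apply, hb, Finset.min'_singleton]
    case right_inv =>
      intro π hπ
      apply Equiv.ext
      intro s
      simp only [Equiv.ofBijective_apply, Finset.min'_singleton]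
  rw [key, Finset.card_univ, Fintype.card_perm, Fintype.card_fin]

end Aux

theorem statement3 (r : ℕ) (hr : 1 ≤ r) :
    MvPowerSeries.coeff (Finsupp.equivFunOnFinite.symm fun _ : Fin r => 1) (Hps r)
      = (r - 1).factorial / 24 := by
  have he : (Finsupp.equivFunOnFinite.symm fun _ : Fin r => 1)
      = esum (Finset.univ : Finset (Fin r)) := by
    ext j
    rw [esum_apply, if_pos (Finset.mem_univ j)]
    rfl
  rw [he, Hps, map_sum]
  rw [Finset.sum_eq_single_of_mem r (Finset.mem_Icc.mpr ⟨hr, le_rfl⟩)]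
  · rw [map_smul, map_sum]
    have hall : ∀ I ∈ Finset.univ.filter (fun I : Fin r → Finset (Fin r) => IsOSP I),
        MvPowerSeries.coeff (esum Finset.univ) (∏ s, blockFactor (I s)) = (-1) ^ r :=
      fun I hI => coeff_osp_r (Finset.mem_filter.mp hI).2
    rw [Finset.sum_congr rfl hall, Finset.sum_const, card_osp_r]
    have hfac : (r.factorial : ℚ) = r * (r - 1).factorial := by
      rw [← Nat.mul_factorial_pred (by omega : r ≠ 0)]
      push_cast
      ring
    have hrne : (r : ℚ) ≠ 0 := by
      simp only [ne_eq, Nat.cast_eq_zero]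
      omega
    rw [smul_eq_mul, nsmul_eq_mul, hfac]
    rcases Nat.even_or_odd r with hev | hod
    · rw [hev.neg_one_pow]
      field_simp
    · rw [hod.neg_one_pow]
      field_simp
  · intro m hm hmr
    have hmlt : m < r := lt_of_le_of_ne (Finset.mem_Icc.mp hm).2 hmr
    rw [map_smul, map_sum, smul_eq_mul]
    rw [Finset.sum_eq_zero, mul_zero]
    intro I hI
    have hIosp := (Finset.mem_filter.mp hI).2
    have hsum := sum_card_osp hIosp
    have h1 : ∀ s : Fin m, 1 ≤ (I s).card := fun s => (hIosp.1 s).card_pos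
    have hex : ∃ t, 2 ≤ (I t).card := by
      by_contra h
      push_neg at h
      have : ∑ s, (I s).card ≤ ∑ _s : Fin m, 1 :=
        Finset.sum_le_sum (fun i _ => by have := h i; omega)
      simp only [Finset.sum_const, Finset.card_univ, Fintype.card_fin, smul_eq_mul,
        mul_one] at this
      omega
    obtain ⟨t, ht⟩ := hex
    exact coeff_osp_zero hIosp ht
end

section
/- With M as above, for F ∈ P one has M F ∈ P_1 if and only if F ∈ P_1. -/
open PowerSeries

/-- Evaluation of the `w`-dependent coefficients of a power series in `q` at `w = 0`. -/
noncomputable def evalZero (F : PowerSeries (RatFunc ℚ)) : PowerSeries ℚ :=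
  PowerSeries.mk fun n => RatFunc.eval (RingHom.id ℚ) 0 (coeff n F)

/-- The operator `(M F)(w,q) = (1 + (q/w)∂_q)(F(w,q)/F(0,q))`. -/
noncomputable def Mop (F : PowerSeries (RatFunc ℚ)) : PowerSeries (RatFunc ℚ) :=
  PowerSeries.mk fun n =>
    (1 + (n : RatFunc ℚ) / RatFunc.X) *
      coeff n
        (F * (PowerSeries.map (algebraMap ℚ (RatFunc ℚ)) (evalZero F))⁻¹)

/-- Formal logarithm of a power series with constant term `1`:
`log F = Σ_{k≥1} (-1)^{k+1} (F-1)^k / k`, whose `n`-th coefficient involves only the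
finitely many terms with `k ≤ n` since `F - 1` has positive order. -/
noncomputable def plog (F : PowerSeries (RatFunc ℚ)) : PowerSeries (RatFunc ℚ) :=
  PowerSeries.mk fun n =>
    coeff n
      (∑ k ∈ Finset.Icc 1 n, ((-1 : ℚ) ^ (k + 1) / k) • (F - 1) ^ k)

/-- The class `P`: power series in `q` with constant term `1` whose coefficients are
rational functions of `w` regular at `w = 0`. -/
def memP (F : PowerSeries (RatFunc ℚ)) : Prop :=
  constantCoeff F = 1 ∧
    ∀ n, Polynomial.eval 0 (coeff n F).denom ≠ 0

/-- A rational function of `w` is `O(w)` as `w → ∞`: the degree of its numerator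
exceeds the degree of its denominator by at most `1`. -/
def BigOw (f : RatFunc ℚ) : Prop := f.num.natDegree ≤ f.denom.natDegree + 1

/-- The class `P₁ ⊆ P`: members of `P` all of whose `log`-coefficients are `O(w)`. -/
def memP1 (F : PowerSeries (RatFunc ℚ)) : Prop :=
  memP F ∧ ∀ n, BigOw (coeff n (plog F))

namespace St14
abbrev K := RatFunc ℚ

lemma eval₂_id (p : Polynomial ℚ) (x : ℚ) : p.eval₂ (RingHom.id ℚ) x = p.eval x := rfl

def D (k : ℤ) (f : K) : Prop := f = 0 ∨ f.intDegree ≤ k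

lemma D_zero (k : ℤ) : D k 0 := Or.inl rfl

lemma D_mono {k k' : ℤ} (h : k ≤ k') {f : K} (hf : D k f) : D k' f :=
  hf.imp id (fun h' => h'.trans h)

lemma D_add {k : ℤ} {f g : K} (hf : D k f) (hg : D k g) : D k (f + g) := by
  rcases hf with rfl | hf
  · simpa using hg
  by_cases hg0 : g = 0
  · subst hg0; rw [add_zero]; exact Or.inr hf
  rcases hg with hg | hg
  · exact absurd hg hg0
  by_cases hfg : f + g = 0
  · exact Or.inl hfg
  exact Or.inr ((RatFunc.intDegree_add_le hg0 hfg).trans (max_le hf hg))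

lemma D_neg {k : ℤ} {f : K} (hf : D k f) : D k (-f) := by
  rcases hf with rfl | hf
  · simpa using D_zero k
  · right; rwa [RatFunc.intDegree_neg]

lemma D_sub {k : ℤ} {f g : K} (hf : D k f) (hg : D k g) : D k (f - g) := by
  rw [sub_eq_add_neg]; exact D_add hf (D_neg hg)

lemma D_mul {k l : ℤ} {f g : K} (hf : D k f) (hg : D l g) : D (k + l) (f * g) := by
  rcases hf with rfl | hf
  · simpa using D_zero _
  rcases hg with rfl | hg
  · simpa using D_zero _
  by_cases hf0 : f = 0
  · simp [hf0, D_zero]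
  by_cases hg0 : g = 0
  · simp [hg0, D_zero]
  right
  rw [RatFunc.intDegree_mul hf0 hg0]
  exact add_le_add hf hg

lemma D_one : D 0 (1 : K) := Or.inr (le_of_eq RatFunc.intDegree_one)

lemma D_C (c : ℚ) : D 0 (RatFunc.C c) := Or.inr (le_of_eq (RatFunc.intDegree_C c))

lemma algebraMap_rat_eq_C (c : ℚ) : algebraMap ℚ K c = RatFunc.C c := by
  rw [IsScalarTower.algebraMap_apply ℚ (Polynomial ℚ) K, Polynomial.algebraMap_eq,
    RatFunc.algebraMap_C]

lemma D_algebraMap (c : ℚ) : D 0 (algebraMap ℚ K c) := by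
  rw [algebraMap_rat_eq_C]; exact D_C c

lemma D_natCast (n : ℕ) : D 0 ((n : K)) := by
  rw [← map_natCast (RatFunc.C : ℚ →+* K) n]; exact D_C _

lemma intDegree_inv {f : K} (hf : f ≠ 0) : f⁻¹.intDegree = -f.intDegree := by
  have h := RatFunc.intDegree_mul hf (inv_ne_zero hf)
  rw [mul_inv_cancel₀ hf, RatFunc.intDegree_one] at h
  omega

lemma D_inv_X : D (-1) ((RatFunc.X : K)⁻¹) := by
  right
  rw [intDegree_inv RatFunc.X_ne_zero, RatFunc.intDegree_X]

lemma D_sum {k : ℤ} {ι : Type*} (s : Finset ι) (f : ι → K) (h : ∀ i ∈ s, D k (f i)) :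
    D k (∑ i ∈ s, f i) := by
  classical
  induction s using Finset.induction_on with
  | empty => simpa using D_zero k
  | insert a s' hni ih =>
    rw [Finset.sum_insert hni]
    exact D_add (h a (Finset.mem_insert_self a s'))
      (ih (fun i hi => h i (Finset.mem_insert_of_mem hi)))

noncomputable def O1 : Subring K where
  carrier := {f | D 0 f}
  zero_mem' := D_zero 0
  one_mem' := D_one
  add_mem' := D_add
  neg_mem' := D_neg
  mul_mem' := by intro a b ha hb; simpa using D_mul ha hb

lemma mem_O1 {f : K} : f ∈ O1 ↔ D 0 f := Iff.rfl

lemma BigOw_iff_D (f : K) : BigOw f ↔ D 1 f := by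
  unfold BigOw D RatFunc.intDegree
  constructor
  · intro h
    right; omega
  · rintro (rfl | h)
    · simp
    · omega

def Reg (f : K) : Prop := Polynomial.eval 0 f.denom ≠ 0

lemma Reg_of_dvd {f : K} {p : Polynomial ℚ} (hd : f.denom ∣ p) (hp : Polynomial.eval 0 p ≠ 0) :
    Reg f := by
  obtain ⟨c, rfl⟩ := hd
  rw [Polynomial.eval_mul] at hp
  exact fun h => hp (by rw [h, zero_mul])

lemma Reg_add {f g : K} (hf : Reg f) (hg : Reg g) : Reg (f + g) :=
  Reg_of_dvd (RatFunc.denom_add_dvd f g) (by rw [Polynomial.eval_mul]; exact mul_ne_zero hf hg)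

lemma Reg_mul {f g : K} (hf : Reg f) (hg : Reg g) : Reg (f * g) :=
  Reg_of_dvd (RatFunc.denom_mul_dvd f g) (by rw [Polynomial.eval_mul]; exact mul_ne_zero hf hg)

lemma Reg_C (c : ℚ) : Reg (RatFunc.C c) := by
  unfold Reg
  rw [← RatFunc.algebraMap_C, RatFunc.denom_algebraMap]
  simp

lemma Reg_zero : Reg 0 := by simpa using Reg_C 0
lemma Reg_one : Reg 1 := by simpa using Reg_C 1

lemma Reg_neg {f : K} (hf : Reg f) : Reg (-f) := by
  have : -f = RatFunc.C (-1) * f := by simp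
  rw [this]; exact Reg_mul (Reg_C _) hf

lemma Reg_algebraMap (c : ℚ) : Reg (algebraMap ℚ K c) := by
  rw [algebraMap_rat_eq_C]; exact Reg_C c

noncomputable def O0 : Subring K where
  carrier := {f | Reg f}
  zero_mem' := Reg_zero
  one_mem' := Reg_one
  add_mem' := Reg_add
  neg_mem' := Reg_neg
  mul_mem' := Reg_mul

noncomputable def ev0 (f : K) : ℚ := RatFunc.eval (RingHom.id ℚ) 0 f

lemma ev0_add {f g : K} (hf : Reg f) (hg : Reg g) : ev0 (f + g) = ev0 f + ev0 g :=
  RatFunc.eval_add _ _ hf hg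

lemma ev0_mul {f g : K} (hf : Reg f) (hg : Reg g) : ev0 (f * g) = ev0 f * ev0 g :=
  RatFunc.eval_mul _ _ hf hg

lemma ev0_C (c : ℚ) : ev0 (RatFunc.C c) = c := RatFunc.eval_C _ _

lemma ev0_algebraMap (c : ℚ) : ev0 (algebraMap ℚ K c) = c := by
  rw [algebraMap_rat_eq_C]; exact ev0_C c

lemma ev0_one : ev0 1 = 1 := by simpa using ev0_C 1

lemma ev0_sum {ι : Type*} (s : Finset ι) (f : ι → K) (h : ∀ i ∈ s, Reg (f i)) :
    ev0 (∑ i ∈ s, f i) = ∑ i ∈ s, ev0 (f i) := by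
  classical
  induction s using Finset.induction_on with
  | empty => simpa using ev0_C 0
  | insert a s' hni ih =>
    rw [Finset.sum_insert hni, Finset.sum_insert hni,
      ev0_add (h a (Finset.mem_insert_self a s'))
        (Subring.sum_mem O0 (fun i hi => h i (Finset.mem_insert_of_mem hi))),
      ih (fun i hi => h i (Finset.mem_insert_of_mem hi))]

lemma Reg_div_X {f : K} (hf : Reg f) (h0 : ev0 f = 0) : Reg (f * (RatFunc.X)⁻¹) := by
  have hnum : Polynomial.eval 0 f.num = 0 := by
    have he : ev0 f = Polynomial.eval 0 f.num / Polynomial.eval 0 f.denom := rfl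
    rw [he] at h0
    exact (div_eq_zero_iff.mp h0).resolve_right hf
  have hX : (Polynomial.X : Polynomial ℚ) ∣ f.num := by
    have := Polynomial.dvd_iff_isRoot.mpr (show f.num.IsRoot 0 from hnum)
    simpa using this
  obtain ⟨p, hp⟩ := hX
  have hd : algebraMap (Polynomial ℚ) K f.denom ≠ 0 :=
    RatFunc.algebraMap_ne_zero (RatFunc.denom_ne_zero f)
  have hfeq : f * (RatFunc.X)⁻¹ =
      algebraMap (Polynomial ℚ) K p / algebraMap (Polynomial ℚ) K f.denom := by
    rw [eq_div_iff hd]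
    have hfd : f * algebraMap (Polynomial ℚ) K f.denom = algebraMap (Polynomial ℚ) K f.num :=
      ((div_eq_iff hd).mp (RatFunc.num_div_denom f)).symm
    calc f * (RatFunc.X)⁻¹ * algebraMap (Polynomial ℚ) K f.denom
        = f * algebraMap (Polynomial ℚ) K f.denom * (RatFunc.X)⁻¹ := by ring
      _ = algebraMap (Polynomial ℚ) K f.num * (RatFunc.X)⁻¹ := by rw [hfd]
      _ = algebraMap (Polynomial ℚ) K p := by
          rw [hp, map_mul, RatFunc.algebraMap_X, mul_right_comm,
            mul_inv_cancel₀ RatFunc.X_ne_zero, one_mul]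
  rw [hfeq]
  exact Reg_of_dvd (RatFunc.denom_div_dvd p f.denom) hf

end St14

namespace St14
open PowerSeries

abbrev PS := PowerSeries K

/-- the operator `q ∂_q` -/
noncomputable def qD (A : PS) : PS := PowerSeries.mk fun n => (n : K) * coeff n A

@[simp] lemma coeff_qD (n : ℕ) (A : PS) : coeff n (qD A) = (n : K) * coeff n A := by
  simp [qD, coeff_mk]

lemma qD_add (A B : PS) : qD (A + B) = qD A + qD B := by
  ext n; simp [mul_add]

lemma qD_one : qD (1 : PS) = 0 := by
  ext n
  rcases Nat.eq_zero_or_pos n with rfl | hn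
  · simp
  · simp [coeff_one, Nat.pos_iff_ne_zero.mp hn]

lemma qD_mul (A B : PS) : qD (A * B) = qD A * B + A * qD B := by
  ext n
  rw [map_add, coeff_qD, coeff_mul, coeff_mul, coeff_mul, Finset.mul_sum, ← Finset.sum_add_distrib]
  apply Finset.sum_congr rfl
  intro p hp
  rw [Finset.HasAntidiagonal.mem_antidiagonal] at hp
  rw [coeff_qD, coeff_qD]
  have : ((n : K)) = ((p.1 : K)) + ((p.2 : K)) := by
    rw [← hp]; push_cast; ring
  rw [this]; ring

lemma qD_smul (c : ℚ) (A : PS) : qD (c • A) = c • qD A := by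
  ext n
  rw [coeff_qD, PowerSeries.coeff_smul, PowerSeries.coeff_smul, coeff_qD, Algebra.smul_def, Algebra.smul_def, mul_left_comm]

lemma qD_pow (A : PS) (k : ℕ) : qD (A ^ (k+1)) = (k+1) • (A ^ k * qD A) := by
  induction k with
  | zero => simp [qD_mul, qD_one]
  | succ k ih =>
    rw [pow_succ, qD_mul, ih]
    rw [succ_nsmul]
    push_cast
    ring_nf

end St14

namespace St14
open PowerSeries

lemma coeff_pow_eq_zero {A : PS} (h : constantCoeff A = 0) :
    ∀ {k m : ℕ}, m < k → coeff m (A ^ k) = 0 := by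
  intro k
  induction k with
  | zero => intro m hm; omega
  | succ k ih =>
    intro m hm
    rw [pow_succ, coeff_mul]
    apply Finset.sum_eq_zero
    intro p hp
    rw [Finset.HasAntidiagonal.mem_antidiagonal] at hp
    by_cases h1 : p.1 < k
    · rw [ih h1, zero_mul]
    · have hp2 : p.2 = 0 := by omega
      rw [hp2, coeff_zero_eq_constantCoeff, h, mul_zero]

lemma constantCoeff_pow_eq_zero {A : PS} (h : constantCoeff A = 0) {k : ℕ} (hk : 1 ≤ k) :
    constantCoeff (A ^ k) = 0 := by
  rw [map_pow, h, zero_pow (by omega)]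

lemma coeff_plog_zero (F : PS) : coeff 0 (plog F) = 0 := by
  simp [plog, coeff_mk]

lemma coeff_plog_trunc (F : PS) (hF : constantCoeff F = 1) {m N : ℕ} (hm : m ≤ N) :
    coeff m (plog F) =
      coeff m (∑ k ∈ Finset.Icc 1 N, ((-1 : ℚ) ^ (k + 1) / k) • (F - 1) ^ k) := by
  have hu : constantCoeff (F - 1) = 0 := by simp [hF]
  rw [plog, coeff_mk, map_sum, map_sum]
  apply Finset.sum_subset (Finset.Icc_subset_Icc_right hm)
  intro k hk hk'
  rw [Finset.mem_Icc] at hk hk'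
  have hmk : m < k := by omega
  rw [PowerSeries.coeff_smul, coeff_pow_eq_zero hu hmk, smul_zero]

lemma L1 {F : PS} (hF : constantCoeff F = 1) : F * qD (plog F) = qD F := by
  ext n
  rcases Nat.eq_zero_or_pos n with rfl | hn
  · simp only [coeff_zero_eq_constantCoeff, map_mul]
    simp [qD]
  set u := F - 1 with hu
  have hu0 : constantCoeff u = 0 := by simp [hu, hF]
  set P : PS := ∑ k ∈ Finset.Icc 1 n, ((-1 : ℚ) ^ (k + 1) / k) • u ^ k with hP
  have hcoeff : coeff n (F * qD (plog F)) = coeff n (F * qD P) := by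
    rw [coeff_mul, coeff_mul]
    apply Finset.sum_congr rfl
    intro p hp
    rw [Finset.HasAntidiagonal.mem_antidiagonal] at hp
    rw [coeff_qD, coeff_qD, coeff_plog_trunc F hF (show p.2 ≤ n by omega)]
  rw [hcoeff]
  -- rewrite P as a range sum
  have hPr : P = ∑ i ∈ Finset.range n, ((-1 : ℚ) ^ (1 + i + 1) / (1 + i : ℕ)) • u ^ (1 + i) := by
    rw [hP, ← Finset.Ico_add_one_right_eq_Icc, Finset.sum_Ico_eq_sum_range]
    simp
  have hqDu : qD u = qD F := by
    rw [hu, sub_eq_add_neg, qD_add]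
    have h1 : (-(1 : PS)) = (-1 : ℚ) • (1 : PS) := by rw [neg_smul, one_smul]
    rw [h1, qD_smul, qD_one, smul_zero, add_zero]
  have hqDP : qD P = (∑ i ∈ Finset.range n, (-1 : PS) ^ i * u ^ i) * qD F := by
    rw [hPr]
    have hsum : qD (∑ i ∈ Finset.range n, ((-1 : ℚ) ^ (1 + i + 1) / (1 + i : ℕ)) • u ^ (1 + i)) =
        ∑ i ∈ Finset.range n, qD (((-1 : ℚ) ^ (1 + i + 1) / (1 + i : ℕ)) • u ^ (1 + i)) := by
      ext m
      rw [coeff_qD, map_sum, map_sum, Finset.mul_sum]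
      apply Finset.sum_congr rfl
      intro i _
      rw [coeff_qD]
    rw [hsum, Finset.sum_mul]
    apply Finset.sum_congr rfl
    intro i _
    have hpow : (1 + i) = i + 1 := by omega
    rw [qD_smul, hpow, qD_pow, hqDu]
    rw [← Nat.cast_smul_eq_nsmul ℚ, smul_smul]
    have hne : ((i + 1 : ℕ) : ℚ) ≠ 0 := by positivity
    have hsc : ((-1 : ℚ) ^ (i + 1 + 1) / ((i + 1 : ℕ) : ℚ)) * ((i + 1 : ℕ) : ℚ) = (-1 : ℚ) ^ i := by
      have h2 : (-1 : ℚ) ^ (i + 1 + 1) = (-1 : ℚ) ^ i := by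
        rw [pow_succ, pow_succ]; ring
      rw [h2]
      field_simp
    rw [hsc, Algebra.smul_def]
    have halg : algebraMap ℚ PS ((-1 : ℚ) ^ i) = (-1 : PS) ^ i := by
      rw [map_pow, map_neg, map_one]
    rw [halg]
    ring
  -- geometric series identity
  have hgeom : F * (∑ i ∈ Finset.range n, (-1 : PS) ^ i * u ^ i) = 1 - (-u) ^ n := by
    have h1 : ∑ i ∈ Finset.range n, (-1 : PS) ^ i * u ^ i = ∑ i ∈ Finset.range n, (-u) ^ i := by
      apply Finset.sum_congr rfl
      intro i _
      exact (neg_pow u i).symm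
    rw [h1]
    have h2 := geom_sum_mul (-u : PS) n
    -- (∑ i ∈ range n, (-u)^i) * (-u - 1) = (-u)^n - 1
    have hFu : F = 1 + u := by rw [hu]; ring
    rw [hFu]
    linear_combination -h2
  rw [hqDP, ← mul_assoc, hgeom, sub_mul, one_mul, map_sub]
  have hz : coeff n ((-u) ^ n * qD F) = 0 := by
    rw [coeff_mul]
    apply Finset.sum_eq_zero
    intro p hp
    rw [Finset.HasAntidiagonal.mem_antidiagonal] at hp
    by_cases h1 : p.1 < n
    · rw [coeff_pow_eq_zero (by simp [hu0]) h1, zero_mul]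
    · have hp2 : p.2 = 0 := by omega
      rw [hp2, coeff_zero_eq_constantCoeff]
      simp [qD, constantCoeff_mk]
  rw [hz, sub_zero]

end St14

namespace St14
open PowerSeries

lemma natCast_K_ne_zero {n : ℕ} (h : 0 < n) : (n : K) ≠ 0 := by
  have h1 : ((n : K)) = algebraMap ℚ K ((n : ℚ)) := (map_natCast (algebraMap ℚ K) n).symm
  rw [h1]
  intro hc
  have h2 := (algebraMap ℚ K).injective (hc.trans (map_zero (algebraMap ℚ K)).symm)
  have h3 : (n : ℚ) ≠ 0 := by positivity
  exact h3 h2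

lemma PS_ne_zero {A : PS} (hA : constantCoeff A = 1) : A ≠ 0 := by
  intro h
  rw [h, map_zero] at hA
  exact zero_ne_one hA

lemma plog_mul {A B : PS} (hA : constantCoeff A = 1) (hB : constantCoeff B = 1) :
    plog (A * B) = plog A + plog B := by
  have hAB : constantCoeff (A * B) = 1 := by rw [map_mul, hA, hB, one_mul]
  have key : (A * B) * qD (plog (A * B)) = (A * B) * qD (plog A + plog B) := by
    rw [L1 hAB, qD_add, mul_add]
    calc qD (A * B) = qD A * B + A * qD B := qD_mul A B
      _ = (A * qD (plog A)) * B + A * (B * qD (plog B)) := by rw [L1 hA, L1 hB]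
      _ = A * B * qD (plog A) + A * B * qD (plog B) := by ring
  have h2 : qD (plog (A * B)) = qD (plog A + plog B) := mul_left_cancel₀ (PS_ne_zero hAB) key
  ext n
  rcases Nat.eq_zero_or_pos n with rfl | hn
  · rw [coeff_plog_zero, map_add, coeff_plog_zero, coeff_plog_zero, add_zero]
  have h3 := congrArg (coeff n) h2
  rw [coeff_qD, coeff_qD] at h3
  have hne : ((n : K)) ≠ 0 := natCast_K_ne_zero hn
  exact mul_left_cancel₀ hne h3

lemma rat_smul_K (c : ℚ) (x : K) : c • x = algebraMap ℚ K c * x := by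
  rw [RatFunc.smul_eq_C_mul, algebraMap_rat_eq_C]

lemma coeff_rat_smul (n : ℕ) (c : ℚ) (B : PS) :
    coeff n (c • B) = algebraMap ℚ K c * coeff n B :=
  by rw [PowerSeries.coeff_smul, Algebra.smul_def]

lemma coeff_one_mem (S : Subring K) (n : ℕ) : coeff n (1 : PS) ∈ S := by
  rcases Nat.eq_zero_or_pos n with rfl | hn
  · simpa using S.one_mem
  · rw [coeff_one, if_neg (by omega)]
    exact S.zero_mem

lemma coeff_mul_mem (S : Subring K) {A B : PS} (hA : ∀ j, coeff j A ∈ S)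
    (hB : ∀ j, coeff j B ∈ S) (n : ℕ) : coeff n (A * B) ∈ S := by
  rw [coeff_mul]
  exact Subring.sum_mem _ (fun p _ => S.mul_mem (hA _) (hB _))

lemma coeff_pow_mem (S : Subring K) {A : PS} (hA : ∀ j, coeff j A ∈ S) (k n : ℕ) :
    coeff n (A ^ k) ∈ S := by
  induction k generalizing n with
  | zero => rw [pow_zero]; exact coeff_one_mem S n
  | succ k ih => rw [pow_succ]; exact coeff_mul_mem S ih hA n

lemma coeff_plog_mem (S : Subring K) (hS : ∀ c : ℚ, algebraMap ℚ K c ∈ S) {A : PS}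
    (hA : ∀ j, coeff j A ∈ S) (n : ℕ) : coeff n (plog A) ∈ S := by
  rw [plog, coeff_mk, map_sum]
  refine Subring.sum_mem _ (fun k _ => ?_)
  rw [coeff_rat_smul]
  refine S.mul_mem (hS _) (coeff_pow_mem S (fun j => ?_) k n)
  rw [map_sub]
  exact S.sub_mem (hA j) (coeff_one_mem S j)

/-- refined power membership: only coefficients below `n` are needed when `k ≥ 2`. -/
lemma coeff_pow_mem' (S : Subring K) {A : PS} (h0 : constantCoeff A = 0) (n : ℕ)
    (hA : ∀ j, j < n → coeff j A ∈ S) :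
    ∀ k, 2 ≤ k → ∀ m, m ≤ n → coeff m (A ^ k) ∈ S := by
  intro k
  induction k with
  | zero => intro hk; omega
  | succ k ih =>
    intro hk m hm
    rcases Nat.lt_or_ge k 2 with hk2 | hk2
    · -- k + 1 = 2, i.e. k = 1
      have hk1 : k = 1 := by omega
      subst hk1
      rw [pow_succ, pow_one, coeff_mul]
      refine Subring.sum_mem _ (fun p hp => ?_)
      rw [Finset.HasAntidiagonal.mem_antidiagonal] at hp
      rcases Nat.eq_zero_or_pos p.1 with h1 | h1
      · rw [h1, coeff_zero_eq_constantCoeff, h0, zero_mul]; exact S.zero_mem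
      rcases Nat.eq_zero_or_pos p.2 with h2 | h2
      · rw [h2, coeff_zero_eq_constantCoeff, h0, mul_zero]; exact S.zero_mem
      exact S.mul_mem (hA p.1 (by omega)) (hA p.2 (by omega))
    · rw [pow_succ', coeff_mul]
      refine Subring.sum_mem _ (fun p hp => ?_)
      rw [Finset.HasAntidiagonal.mem_antidiagonal] at hp
      rcases Nat.eq_zero_or_pos p.1 with h1 | h1
      · rw [h1, coeff_zero_eq_constantCoeff, h0, zero_mul]; exact S.zero_mem
      rcases Nat.eq_zero_or_pos p.2 with h2 | h2
      · rw [h2, coeff_zero_eq_constantCoeff, constantCoeff_pow_eq_zero h0 (by omega), mul_zero]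
        exact S.zero_mem
      exact S.mul_mem (hA p.1 (by omega)) (ih hk2 p.2 (by omega))

lemma coeff_plog_one_add (V : PS) {n : ℕ} (hn : 1 ≤ n) :
    coeff n (plog (1 + V)) =
      coeff n V + ∑ k ∈ Finset.Icc 2 n,
        algebraMap ℚ K ((-1 : ℚ) ^ (k + 1) / k) * coeff n (V ^ k) := by
  rw [plog, coeff_mk]
  have h1 : (1 : PS) + V - 1 = V := by ring
  rw [h1]
  have hsplit : Finset.Icc 1 n = insert 1 (Finset.Icc 2 n) := by
    ext x
    simp only [Finset.mem_Icc, Finset.mem_insert]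
    omega
  rw [hsplit, Finset.sum_insert (by simp), map_add, map_sum]
  congr 1
  · rw [coeff_rat_smul, pow_one]
    norm_num

end St14

namespace St14
open PowerSeries

noncomputable def mE (F : PS) : PS := PowerSeries.map (algebraMap ℚ K) (evalZero F)
noncomputable def G (F : PS) : PS := F * (mE F)⁻¹
noncomputable def Vs (F : PS) : PS :=
  PowerSeries.mk fun n => ((n : K) / RatFunc.X) * coeff n (plog (G F))

variable {F : PS}

lemma coeff_evalZero (n : ℕ) : coeff n (evalZero F) = ev0 (coeff n F) := by
  rw [evalZero, coeff_mk]; rfl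

lemma coeff_mE (n : ℕ) : coeff n (mE F) = algebraMap ℚ K (coeff n (evalZero F)) := by
  rw [mE, PowerSeries.coeff_map]


lemma coeff_plog_mE_const (n : ℕ) :
    coeff n (plog (mE F)) ∈ (algebraMap ℚ K).range := by
  refine coeff_plog_mem (algebraMap ℚ K).range (fun c => RingHom.mem_range_self _ c)
    (fun j => ?_) n
  rw [coeff_mE]
  exact RingHom.mem_range_self _ _

lemma D0_of_range {x : K} (hx : x ∈ (algebraMap ℚ K).range) : D 0 x := by
  obtain ⟨c, rfl⟩ := hx
  exact D_algebraMap c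

lemma Reg_of_range {x : K} (hx : x ∈ (algebraMap ℚ K).range) : Reg x := by
  obtain ⟨c, rfl⟩ := hx
  exact Reg_algebraMap c

/-- transfer of the `O(w)` condition between `plog F` and `plog G`. -/
lemma coeff_Vs (n : ℕ) :
    coeff n (Vs F) = ((n : K) / RatFunc.X) * coeff n (plog (G F)) := by
  rw [Vs, coeff_mk]

lemma constantCoeff_Vs : constantCoeff (Vs F) = 0 := by
  rw [← coeff_zero_eq_constantCoeff, coeff_Vs]
  simp

lemma constantCoeff_one_add_Vs : constantCoeff (1 + Vs F) = 1 := by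
  rw [map_add, map_one, constantCoeff_Vs, add_zero]

lemma one_add_nX_eq (n : ℕ) :
    1 + (n : K) / RatFunc.X =
      algebraMap (Polynomial ℚ) K (Polynomial.X + Polynomial.C ((n : ℚ))) * (RatFunc.X)⁻¹ := by
  rw [map_add, RatFunc.algebraMap_X, RatFunc.algebraMap_C, map_natCast (RatFunc.C : ℚ →+* K) n]
  rw [div_eq_mul_inv, add_mul, mul_inv_cancel₀ RatFunc.X_ne_zero]

lemma one_add_nX_ne_zero (n : ℕ) : (1 : K) + (n : K) / RatFunc.X ≠ 0 := by
  rw [one_add_nX_eq]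
  exact mul_ne_zero (RatFunc.algebraMap_ne_zero (Polynomial.X_add_C_ne_zero ((n : ℚ))))
    (inv_ne_zero RatFunc.X_ne_zero)

lemma intDegree_one_add_nX (n : ℕ) : ((1 : K) + (n : K) / RatFunc.X).intDegree = 0 := by
  rw [one_add_nX_eq]
  rw [RatFunc.intDegree_mul (RatFunc.algebraMap_ne_zero (Polynomial.X_add_C_ne_zero ((n : ℚ))))
    (inv_ne_zero RatFunc.X_ne_zero)]
  rw [RatFunc.intDegree_polynomial, intDegree_inv RatFunc.X_ne_zero, RatFunc.intDegree_X]
  rw [Polynomial.natDegree_X_add_C]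
  ring

lemma D0_inv_one_add_nX (n : ℕ) : D 0 (((1 : K) + (n : K) / RatFunc.X)⁻¹) :=
  Or.inr (le_of_eq (by rw [intDegree_inv (one_add_nX_ne_zero n), intDegree_one_add_nX]; ring))


section OfConstOne
variable (hc : constantCoeff F = 1)
include hc

lemma constantCoeff_evalZero : constantCoeff (evalZero F) = 1 := by
  rw [← coeff_zero_eq_constantCoeff, coeff_evalZero, coeff_zero_eq_constantCoeff, hc, ev0_one]

lemma constantCoeff_mE : constantCoeff (mE F) = 1 := by
  rw [← coeff_zero_eq_constantCoeff, coeff_mE, coeff_zero_eq_constantCoeff,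
    constantCoeff_evalZero hc, map_one]

lemma G_mul_mE : G F * mE F = F := by
  rw [G, mul_assoc, PowerSeries.inv_mul_cancel _ (by rw [constantCoeff_mE hc]; exact one_ne_zero),
    mul_one]

lemma constantCoeff_G : constantCoeff (G F) = 1 := by
  rw [G, map_mul, hc, PowerSeries.constantCoeff_inv, constantCoeff_mE hc, inv_one, one_mul]

lemma mE_inv_eq : (mE F)⁻¹ = PowerSeries.map (algebraMap ℚ K) (evalZero F)⁻¹ := by
  have hE : constantCoeff (evalZero F) ≠ 0 := by
    rw [constantCoeff_evalZero hc]; exact one_ne_zero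
  have h1 : PowerSeries.map (algebraMap ℚ K) (evalZero F)⁻¹ * mE F = 1 := by
    rw [mE, ← map_mul, PowerSeries.inv_mul_cancel _ hE, map_one]
  have h2 : (mE F)⁻¹ * mE F = 1 :=
    PowerSeries.inv_mul_cancel _ (by rw [constantCoeff_mE hc]; exact one_ne_zero)
  exact mul_right_cancel₀ (PS_ne_zero (constantCoeff_mE hc)) (h2.trans h1.symm)

lemma coeff_mE_inv (n : ℕ) :
    coeff n (mE F)⁻¹ = algebraMap ℚ K (coeff n (evalZero F)⁻¹) := by
  rw [mE_inv_eq hc, PowerSeries.coeff_map]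

lemma plog_F_eq : plog F = plog (G F) + plog (mE F) := by
  conv_lhs => rw [← G_mul_mE hc]
  exact plog_mul (constantCoeff_G hc) (constantCoeff_mE hc)

lemma plog_transfer :
    (∀ n, BigOw (coeff n (plog F))) ↔ (∀ n, D 1 (coeff n (plog (G F)))) := by
  constructor
  · intro h n
    have h1 : coeff n (plog (G F)) = coeff n (plog F) - coeff n (plog (mE F)) := by
      rw [plog_F_eq hc, map_add]; ring
    rw [h1]
    exact D_sub ((BigOw_iff_D _).mp (h n))
      (D_mono (by omega) (D0_of_range (coeff_plog_mE_const n)))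
  · intro h n
    rw [BigOw_iff_D, plog_F_eq hc, map_add]
    exact D_add (h n) (D_mono (by omega) (D0_of_range (coeff_plog_mE_const n)))

lemma Mop_eq : Mop F = G F * (1 + Vs F) := by
  ext n
  rw [Mop, coeff_mk]
  have hGV : coeff n (G F * Vs F) = (RatFunc.X)⁻¹ * coeff n (G F * qD (plog (G F))) := by
    rw [coeff_mul, coeff_mul, Finset.mul_sum]
    apply Finset.sum_congr rfl
    intro p _
    rw [coeff_Vs, coeff_qD]
    rw [div_eq_mul_inv]
    ring
  rw [mul_add, mul_one, map_add, hGV, L1 (constantCoeff_G hc), coeff_qD]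
  rw [div_eq_mul_inv]
  rw [show (G F : PS) = F * (mE F)⁻¹ from rfl]
  rw [mE]
  ring

lemma constantCoeff_Mop : constantCoeff (Mop F) = 1 := by
  rw [Mop_eq hc, map_mul, constantCoeff_G hc, constantCoeff_one_add_Vs, one_mul]

lemma plog_Mop_eq : plog (Mop F) = plog (G F) + plog (1 + Vs F) := by
  rw [Mop_eq hc]
  exact plog_mul (constantCoeff_G hc) (constantCoeff_one_add_Vs)

end OfConstOne
end St14

namespace St14
open PowerSeries

lemma Reg_natCastK (n : ℕ) : Reg ((n : K)) := by
  rw [← map_natCast (algebraMap ℚ K) n]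
  exact Reg_algebraMap _

lemma V_coeff_mem_O1 {F : PS} {j : ℕ} (hl : D 1 (coeff j (plog (G F)))) :
    coeff j (Vs F) ∈ O1 := by
  rw [mem_O1, coeff_Vs]
  have hexp : ((j : K) / RatFunc.X) * coeff j (plog (G F)) =
      (j : K) * ((RatFunc.X : K)⁻¹ * coeff j (plog (G F))) := by
    rw [div_eq_mul_inv]; ring
  rw [hexp]
  have h := D_mul (D_natCast j) (D_mul D_inv_X hl)
  norm_num at h
  exact h

lemma coeff_G_Reg {F : PS} (hF : memP F) (j : ℕ) : Reg (coeff j (G F)) :=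
  coeff_mul_mem O0 (fun i => hF.2 i)
    (fun i => Reg_of_range ⟨_, (coeff_mE_inv hF.1 i).symm⟩) j

lemma ev0_coeff_G {F : PS} (hF : memP F) {n : ℕ} (hn : 0 < n) :
    ev0 (coeff n (G F)) = 0 := by
  have hc := hF.1
  have hGc : coeff n (G F) = ∑ p ∈ Finset.HasAntidiagonal.antidiagonal n,
      coeff p.1 F * algebraMap ℚ K (coeff p.2 (evalZero F)⁻¹) := by
    rw [show (G F : PS) = F * (mE F)⁻¹ from rfl, coeff_mul]
    exact Finset.sum_congr rfl (fun p _ => by rw [coeff_mE_inv hc])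
  rw [hGc, ev0_sum _ _ (fun p _ => Reg_mul (hF.2 _) (Reg_algebraMap _))]
  have hterm : ∀ p ∈ Finset.HasAntidiagonal.antidiagonal n,
      ev0 (coeff p.1 F * algebraMap ℚ K (coeff p.2 (evalZero F)⁻¹)) =
        coeff p.1 (evalZero F) * coeff p.2 (evalZero F)⁻¹ := by
    intro p _
    rw [ev0_mul (hF.2 _) (Reg_algebraMap _), ev0_algebraMap, coeff_evalZero]
  rw [Finset.sum_congr rfl hterm, ← PowerSeries.coeff_mul,
    PowerSeries.mul_inv_cancel _ (by rw [constantCoeff_evalZero hc]; exact one_ne_zero),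
    coeff_one, if_neg (by omega)]

lemma forward {F : PS} (hF : memP F) (h1 : ∀ n, BigOw (coeff n (plog F))) :
    memP1 (Mop F) := by
  have hc := hF.1
  have hl : ∀ n, D 1 (coeff n (plog (G F))) := (plog_transfer hc).mp h1
  have hV : ∀ j, coeff j (Vs F) ∈ O1 := fun j => V_coeff_mem_O1 (hl j)
  have h1V : ∀ j, coeff j ((1 : PS) + Vs F) ∈ O1 := fun j => by
    rw [map_add]
    exact O1.add_mem (coeff_one_mem O1 j) (hV j)
  have hplog1V : ∀ n, coeff n (plog (1 + Vs F)) ∈ O1 :=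
    coeff_plog_mem O1 (fun c => D_algebraMap c) h1V
  refine ⟨⟨constantCoeff_Mop hc, ?_⟩, ?_⟩
  · intro n
    show Reg (coeff n (Mop F))
    have hMc : coeff n (Mop F) = (1 + (n : K) / RatFunc.X) * coeff n (G F) := by
      rw [Mop, coeff_mk]; rfl
    rcases Nat.eq_zero_or_pos n with rfl | hn
    · rw [hMc]
      norm_num
      exact (coeff_zero_eq_constantCoeff (R := K)) ▸ coeff_G_Reg hF 0
    · have hev := ev0_coeff_G hF hn
      have hexp : (1 + (n : K) / RatFunc.X) * coeff n (G F) =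
          coeff n (G F) + (n : K) * (coeff n (G F) * (RatFunc.X : K)⁻¹) := by
        rw [div_eq_mul_inv]; ring
      rw [hMc, hexp]
      exact Reg_add (coeff_G_Reg hF n)
        (Reg_mul (Reg_natCastK n) (Reg_div_X (coeff_G_Reg hF n) hev))
  · intro n
    rw [BigOw_iff_D, plog_Mop_eq hc, map_add]
    exact D_add (hl n) (D_mono (by omega) (hplog1V n))

lemma converse_D1 {F : PS} (hF : memP F) (hM : ∀ n, BigOw (coeff n (plog (Mop F)))) :
    ∀ n, D 1 (coeff n (plog (G F))) := by
  have hc := hF.1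
  intro n
  induction n using Nat.strong_induction_on with
  | _ n ih =>
    rcases Nat.eq_zero_or_pos n with rfl | hn
    · rw [coeff_plog_zero]; exact D_zero 1
    have hVmem : ∀ j, j < n → coeff j (Vs F) ∈ O1 := by
      intro j hj
      rcases Nat.eq_zero_or_pos j with rfl | hj0
      · rw [mem_O1, coeff_Vs]
        norm_num
        exact D_zero 0
      · exact V_coeff_mem_O1 (ih j hj)
    have hr : (∑ k ∈ Finset.Icc 2 n,
        algebraMap ℚ K ((-1 : ℚ) ^ (k + 1) / k) * coeff n ((Vs F) ^ k)) ∈ O1 := by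
      refine Subring.sum_mem _ (fun k hk => O1.mul_mem (D_algebraMap _) ?_)
      have hk2 : 2 ≤ k := (Finset.mem_Icc.mp hk).1
      exact coeff_pow_mem' O1 constantCoeff_Vs n hVmem k hk2 n le_rfl
    set r := ∑ k ∈ Finset.Icc 2 n,
        algebraMap ℚ K ((-1 : ℚ) ^ (k + 1) / k) * coeff n ((Vs F) ^ k) with hrdef
    have hEq : (1 + (n : K) / RatFunc.X) * coeff n (plog (G F)) =
        coeff n (plog (Mop F)) - r := by
      rw [plog_Mop_eq hc, map_add, coeff_plog_one_add (Vs F) hn, coeff_Vs]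
      ring
    have hln : coeff n (plog (G F)) =
        (coeff n (plog (Mop F)) - r) * (1 + (n : K) / RatFunc.X)⁻¹ := by
      rw [← hEq, mul_comm (1 + (n : K) / RatFunc.X), mul_assoc,
        mul_inv_cancel₀ (one_add_nX_ne_zero n), mul_one]
    rw [hln]
    have h := D_mul (D_sub ((BigOw_iff_D _).mp (hM n)) (D_mono (by omega) hr))
      (D0_inv_one_add_nX n)
    norm_num at h
    exact h

end St14

/-- For `F ∈ P`, one has `M F ∈ P₁` if and only if `F ∈ P₁`. -/
theorem statement14 (F : PowerSeries (RatFunc ℚ)) (hF : memP F) :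
    memP1 (Mop F) ↔ memP1 F := by
  constructor
  · intro hM
    exact ⟨hF, (St14.plog_transfer hF.1).mpr (St14.converse_D1 hF hM.2)⟩
  · intro h
    exact St14.forward hF h.2
end
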